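/- arXiv:1701.08701 — 11 statements merged into one kernel-verified Lean document; each statement's English description precedes it below -/
import Mathlib

section
/- Let B be an n×k real matrix, let ε, δ ∈ (0,1) with ε ≤ δ and δ < 1/2, and let μ > 0. Assume B satisfies the RIP over 𝓗 with constant ε and the R-RIP over 𝓗−𝓗 with parameter δ and precision μ. Let y̌ ∈ ℝ^k be nonzero, let ř be an ordered selection, let w ∈ ℝ^m, and let x̌ = S_ř B y̌ + w. Suppose (ŷ, r̂) is a global minimizer of (y, r) ↦ ‖S_r B y − x̌‖ over all y ∈ ℝ^k and all ordered selections r. Then d((ŷ,r̂),(y̌,ř)) ≤ χ·√m·‖y̌‖, where χ = max{ μ·√((1+ε)/(1−ε))·(1 + 2‖w‖/‖S_ř B y̌‖), 2‖w‖/(‖S_ř B y̌‖·√(1−2δ)) }. -/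
/-!
Write `N = ‖S_ř B y̌‖` and `d` for the distance to be bounded. Since `(y̌, ř)` is a competitor,
minimality and the triangle inequality give `‖S_r̂ B ŷ - S_ř B y̌‖ ≤ 2‖w‖`. If `d` is above the
R-RIP precision, the lower R-RIP bound gives `(1 - δ) d² ≤ 4‖w‖²`, and the upper RIP bound
`N² ≤ (1 + ε) m ‖y̌‖²` together with `(1 + ε)(1 - 2δ) ≤ 1 - δ` turns this into the second bound.
Otherwise `d < μ √m max(‖ŷ‖, ‖y̌‖)`, and the lower RIP bound applied to `ŷ` and to `y̌`, whose
measurements have norm at most `N + 2‖w‖ ≤ √(1 + ε) √m ‖y̌‖ (1 + 2‖w‖/N)`, gives the first.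
-/

/-- Apply the ordered-selection sampling: `(S_r B y) i = ⟨B_{r i}, y⟩`. -/
noncomputable def selApply {n k m : ℕ} (B : Matrix (Fin n) (Fin k) ℝ) (r : Fin m → Fin n)
    (y : EuclideanSpace ℝ (Fin k)) : EuclideanSpace ℝ (Fin m) :=
  WithLp.toLp 2 (fun i => ∑ j, B (r i) j * y j)

/-- Similarity count `c(r,r') = #{i : r i = r' i}`. -/
def simCount {n m : ℕ} (r r' : Fin m → Fin n) : ℕ :=
  (Finset.univ.filter (fun i => r i = r' i)).card

/-- Distance `d((y,r),(y',r')) = √(m‖y‖² + m‖y'‖² − 2 c(r,r') ⟨y,y'⟩)`. -/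
noncomputable def selDist {n k m : ℕ} (y y' : EuclideanSpace ℝ (Fin k))
    (r r' : Fin m → Fin n) : ℝ :=
  Real.sqrt ((m : ℝ) * ‖y‖ ^ 2 + (m : ℝ) * ‖y'‖ ^ 2
    - 2 * (simCount r r' : ℝ) * (inner ℝ y y' : ℝ))

/-- `B` satisfies the RIP over 𝓗 with constant `ε`. -/
def RIPoverH {n k m : ℕ} (B : Matrix (Fin n) (Fin k) ℝ) (ε : ℝ) : Prop :=
  ∀ (y : EuclideanSpace ℝ (Fin k)) (r : Fin m → Fin n), StrictMono r →
    (1 - ε) * m * ‖y‖ ^ 2 ≤ ‖selApply B r y‖ ^ 2 ∧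
    ‖selApply B r y‖ ^ 2 ≤ (1 + ε) * m * ‖y‖ ^ 2

/-- `B` satisfies the relaxed RIP over 𝓗−𝓗 with parameter `δ` and precision `μ`. -/
def RRIPoverHdiffH {n k m : ℕ} (B : Matrix (Fin n) (Fin k) ℝ) (δ μ : ℝ) : Prop :=
  ∀ (y y' : EuclideanSpace ℝ (Fin k)) (r r' : Fin m → Fin n),
    StrictMono r → StrictMono r' →
    selDist y y' r r' ≥ μ * max (Real.sqrt m * ‖y‖) (Real.sqrt m * ‖y'‖) →
    (1 - δ) * (selDist y y' r r') ^ 2 ≤ ‖selApply B r y - selApply B r' y'‖ ^ 2 ∧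
    ‖selApply B r y - selApply B r' y'‖ ^ 2 ≤ (1 + δ) * (selDist y y' r r') ^ 2


theorem Real.sqrt_mul_le_of_mul_sq_le {a x z : ℝ} (hx : 0 ≤ x) (hz : 0 ≤ z)
    (h : a * x ^ 2 ≤ z ^ 2) : √a * x ≤ z := by
  rw [← Real.sqrt_sq hx, ← Real.sqrt_mul' a (sq_nonneg x), ← Real.sqrt_sq hz]
  exact Real.sqrt_le_sqrt h

theorem Real.le_sqrt_mul_of_sq_le_mul_sq {a x z : ℝ} (hx : 0 ≤ x) (h : z ^ 2 ≤ a * x ^ 2) :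
    z ≤ √a * x := by
  rw [← Real.sqrt_sq hx, ← Real.sqrt_mul' a (sq_nonneg x)]
  exact Real.le_sqrt_of_sq_le h

theorem norm_sub_le_two_mul_norm_of_norm_sub_le {E : Type*} [SeminormedAddCommGroup E]
    {a b w : E} (h : ‖a - (b + w)‖ ≤ ‖b - (b + w)‖) : ‖a - b‖ ≤ 2 * ‖w‖ := by
  rw [sub_add_cancel_left, norm_neg] at h
  calc ‖a - b‖ = ‖(a - (b + w)) + w‖ := by rw [sub_add_eq_sub_sub, sub_add_cancel]
    _ ≤ 2 * ‖w‖ := by linarith [norm_add_le (a - (b + w)) w]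

theorem one_add_mul_one_sub_two_mul_le {ε δ : ℝ} (hεδ : ε ≤ δ) (hδ : δ ≤ 1 / 2) :
    (1 + ε) * (1 - 2 * δ) ≤ 1 - δ := by
  nlinarith [sq_nonneg δ]

namespace RIPoverH

variable {n k m : ℕ} {B : Matrix (Fin n) (Fin k) ℝ} {ε : ℝ} {r : Fin m → Fin n}

theorem sqrt_one_sub_mul_le_norm_selApply (hB : RIPoverH (m := m) B ε) (hr : StrictMono r)
    (y : EuclideanSpace ℝ (Fin k)) : √(1 - ε) * (√m * ‖y‖) ≤ ‖selApply B r y‖ := by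
  refine Real.sqrt_mul_le_of_mul_sq_le (by positivity) (norm_nonneg _) ?_
  rw [mul_pow, Real.sq_sqrt m.cast_nonneg, ← mul_assoc]
  exact (hB y r hr).1

theorem norm_selApply_le_sqrt_one_add_mul (hB : RIPoverH (m := m) B ε) (hr : StrictMono r)
    (y : EuclideanSpace ℝ (Fin k)) : ‖selApply B r y‖ ≤ √(1 + ε) * (√m * ‖y‖) := by
  refine Real.le_sqrt_mul_of_sq_le_mul_sq (by positivity) ?_
  rw [mul_pow, Real.sq_sqrt m.cast_nonneg, ← mul_assoc]
  exact (hB y r hr).2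

theorem norm_selApply_pos (hB : RIPoverH (m := m) B ε) (hε : ε < 1) (hm : 0 < m)
    (hr : StrictMono r) {y : EuclideanSpace ℝ (Fin k)} (hy : y ≠ 0) :
    0 < ‖selApply B r y‖ :=
  lt_of_lt_of_le (by have := norm_pos_iff.2 hy; positivity)
    (hB.sqrt_one_sub_mul_le_norm_selApply hr y)

theorem sqrt_mul_norm_le_of_norm_selApply_le (hB : RIPoverH (m := m) B ε) (hε : ε < 1)
    {r₀ : Fin m → Fin n} (hr : StrictMono r) (hr₀ : StrictMono r₀)
    {y y₀ : EuclideanSpace ℝ (Fin k)} (hy₀ : 0 < ‖selApply B r₀ y₀‖) {t : ℝ} (ht : 0 ≤ t)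
    (hle : ‖selApply B r y‖ ≤ ‖selApply B r₀ y₀‖ + t) :
    √m * ‖y‖ ≤ √((1 + ε) / (1 - ε)) * (1 + t / ‖selApply B r₀ y₀‖) * (√m * ‖y₀‖) := by
  set N := ‖selApply B r₀ y₀‖
  have hsL : 0 < √(1 - ε) := Real.sqrt_pos.2 (by linarith)
  rw [Real.sqrt_div' _ (by linarith : 0 ≤ 1 - ε), div_mul_eq_mul_div, div_mul_eq_mul_div,
    le_div_iff₀' hsL]
  calc √(1 - ε) * (√m * ‖y‖) ≤ N + t :=
        (hB.sqrt_one_sub_mul_le_norm_selApply hr y).trans hle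
    _ = N * (1 + t / N) := by field_simp
    _ ≤ √(1 + ε) * (√m * ‖y₀‖) * (1 + t / N) :=
        mul_le_mul_of_nonneg_right (hB.norm_selApply_le_sqrt_one_add_mul hr₀ y₀)
          (by positivity)
    _ = _ := by ring

end RIPoverH

theorem le_div_mul_of_sq_le_of_sq_le {d e N X ε δ : ℝ} (hd : 0 ≤ d) (he : 0 ≤ e) (hX : 0 ≤ X)
    (hN : 0 < N) (hεδ : ε ≤ δ) (hδ : δ < 1 / 2) (hde : (1 - δ) * d ^ 2 ≤ e ^ 2)
    (hNX : N ^ 2 ≤ (1 + ε) * X ^ 2) : d ≤ e / (N * √(1 - 2 * δ)) * X := by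
  have hs : 0 < √(1 - 2 * δ) := Real.sqrt_pos.2 (by linarith)
  rw [div_mul_eq_mul_div, le_div_iff₀ (by positivity)]
  refine (pow_le_pow_iff_left₀ (by positivity) (by positivity) two_ne_zero).1 ?_
  calc (d * (N * √(1 - 2 * δ))) ^ 2 = d ^ 2 * N ^ 2 * (1 - 2 * δ) := by
        rw [mul_pow, mul_pow, Real.sq_sqrt (by linarith)]; ring
    _ ≤ d ^ 2 * ((1 + ε) * X ^ 2) * (1 - 2 * δ) := by gcongr; linarith
    _ = d ^ 2 * X ^ 2 * ((1 + ε) * (1 - 2 * δ)) := by ring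
    _ ≤ d ^ 2 * X ^ 2 * (1 - δ) := by gcongr; exact one_add_mul_one_sub_two_mul_le hεδ hδ.le
    _ = (1 - δ) * d ^ 2 * X ^ 2 := by ring
    _ ≤ e ^ 2 * X ^ 2 := by gcongr
    _ = (e * X) ^ 2 := by ring

theorem recovery_guarantee_general {n k m : ℕ} (B : Matrix (Fin n) (Fin k) ℝ)
    (ε δ μ : ℝ) (hε1 : ε < 1)
    (hεδ : ε ≤ δ) (hδhalf : δ < 1 / 2) (hμ : 0 < μ)
    (hRIP : RIPoverH (m := m) B ε) (hRRIP : RRIPoverHdiffH (m := m) B δ μ)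
    (ychk : EuclideanSpace ℝ (Fin k)) (hychk : ychk ≠ 0)
    (rchk : Fin m → Fin n) (hrchk : StrictMono rchk)
    (w : EuclideanSpace ℝ (Fin m))
    (xchk : EuclideanSpace ℝ (Fin m)) (hxchk : xchk = selApply B rchk ychk + w)
    (yhat : EuclideanSpace ℝ (Fin k)) (rhat : Fin m → Fin n) (hrhat : StrictMono rhat)
    (hmin : ∀ (y : EuclideanSpace ℝ (Fin k)) (r : Fin m → Fin n), StrictMono r →
      ‖selApply B rhat yhat - xchk‖ ≤ ‖selApply B r y - xchk‖) :
    selDist yhat ychk rhat rchk ≤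
      max (μ * Real.sqrt ((1 + ε) / (1 - ε)) * (1 + 2 * ‖w‖ / ‖selApply B rchk ychk‖))
          (2 * ‖w‖ / (‖selApply B rchk ychk‖ * Real.sqrt (1 - 2 * δ)))
        * Real.sqrt m * ‖ychk‖ := by
  rcases Nat.eq_zero_or_pos m with rfl | hm
  · simp [selDist, simCount]
  set N := ‖selApply B rchk ychk‖
  have hN : 0 < N := hRIP.norm_selApply_pos hε1 hm hrchk hychk
  have hclose : ‖selApply B rhat yhat - selApply B rchk ychk‖ ≤ 2 * ‖w‖ :=
    norm_sub_le_two_mul_norm_of_norm_sub_le (hxchk ▸ hmin ychk rchk hrchk)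
  rw [mul_assoc]
  by_cases hfar : selDist yhat ychk rhat rchk ≥ μ * max (√m * ‖yhat‖) (√m * ‖ychk‖)
  · refine le_trans ?_ (mul_le_mul_of_nonneg_right (le_max_right _ _) (by positivity))
    refine le_div_mul_of_sq_le_of_sq_le (Real.sqrt_nonneg _) (by positivity) (by positivity) hN
      hεδ hδhalf ?_ ?_
    · exact (hRRIP yhat ychk rhat rchk hrhat hrchk hfar).1.trans (by gcongr)
    · rw [mul_pow, Real.sq_sqrt m.cast_nonneg, ← mul_assoc]
      exact (hRIP ychk rchk hrchk).2
  · have hyhat : ‖selApply B rhat yhat‖ ≤ N + 2 * ‖w‖ := by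
      linarith [norm_le_norm_sub_add (selApply B rhat yhat) (selApply B rchk ychk)]
    have hmax : max (√m * ‖yhat‖) (√m * ‖ychk‖) ≤
        √((1 + ε) / (1 - ε)) * (1 + 2 * ‖w‖ / N) * (√m * ‖ychk‖) :=
      max_le (hRIP.sqrt_mul_norm_le_of_norm_selApply_le hε1 hrhat hrchk hN (by positivity) hyhat)
        (hRIP.sqrt_mul_norm_le_of_norm_selApply_le hε1 hrchk hrchk hN (by positivity)
          (le_add_of_nonneg_right (by positivity : (0 : ℝ) ≤ 2 * ‖w‖)))
    calc _ ≤ μ * max (√m * ‖yhat‖) (√m * ‖ychk‖) := le_of_not_ge hfar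
      _ ≤ μ * √((1 + ε) / (1 - ε)) * (1 + 2 * ‖w‖ / N) * (√m * ‖ychk‖) := by
        rw [mul_assoc, mul_assoc]; gcongr; rwa [← mul_assoc]
      _ ≤ _ := by gcongr; exact le_max_left _ _

/-- Theorem 1: recovery guarantee for the global minimizer under RIP and R-RIP. -/
theorem recovery_guarantee {n k m : ℕ} (B : Matrix (Fin n) (Fin k) ℝ)
    (ε δ μ : ℝ) (hε0 : 0 < ε) (hε1 : ε < 1) (hδ0 : 0 < δ) (hδ1 : δ < 1)
    (hεδ : ε ≤ δ) (hδhalf : δ < 1 / 2) (hμ : 0 < μ)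
    (hRIP : RIPoverH (m := m) B ε) (hRRIP : RRIPoverHdiffH (m := m) B δ μ)
    (ychk : EuclideanSpace ℝ (Fin k)) (hychk : ychk ≠ 0)
    (rchk : Fin m → Fin n) (hrchk : StrictMono rchk)
    (w : EuclideanSpace ℝ (Fin m))
    (xchk : EuclideanSpace ℝ (Fin m)) (hxchk : xchk = selApply B rchk ychk + w)
    (yhat : EuclideanSpace ℝ (Fin k)) (rhat : Fin m → Fin n) (hrhat : StrictMono rhat)
    (hmin : ∀ (y : EuclideanSpace ℝ (Fin k)) (r : Fin m → Fin n), StrictMono r →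
      ‖selApply B rhat yhat - xchk‖ ≤ ‖selApply B r y - xchk‖) :
    selDist yhat ychk rhat rchk ≤
      max (μ * Real.sqrt ((1 + ε) / (1 - ε)) * (1 + 2 * ‖w‖ / ‖selApply B rchk ychk‖))
          (2 * ‖w‖ / (‖selApply B rchk ychk‖ * Real.sqrt (1 - 2 * δ)))
        * Real.sqrt m * ‖ychk‖ :=
  recovery_guarantee_general B ε δ μ hε1 hεδ hδhalf hμ hRIP hRRIP ychk hychk rchk hrchk w xchk hxchk
    yhat rhat hrhat hmin
end

section
/- Let ς > 1, ϱ ∈ [0,1), ν₀ = √(1 − ((1−ϱ)/ς)²), and let ν ∈ (ν₀, 1]. Set ϖ = ς·√(1−ν²) + ϱ and ϑ_min = ν − √(ν² − 1 + ϖ²). Then for every (ξ, ϑ) ∈ ℝ² with ξ ≥ ϑ² and 1 + ξ − 2ϑν ≤ ϖ², one has (1 + ξ − (ς·√(1+ξ−2ϑ) + ϱ)²)/(2ϑ) ≥ (1 + ϑ_min² − (ς·(1−ϑ_min) + ϱ)²)/(2·ϑ_min); in other words, the minimum of the left-hand expression over the region {(ξ,ϑ) : ξ ≥ ϑ², 1+ξ−2ϑν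 ≤ ϖ²} is attained at the corner point (ξ, ϑ) = (ϑ_min², ϑ_min). (Note that every (ξ,ϑ) in the region has ϑ > 0, and 1+ξ−2ϑ ≥ (1−ϑ)² ≥ 0, so all expressions are well defined.) -/
/-- From `a² ≤ b²` with both nonnegative, conclude `a ≤ b`. -/
lemma aux_le_of_sq_le (a b : ℝ) (ha : 0 ≤ a) (hb : 0 ≤ b) (h : a ^ 2 ≤ b ^ 2) :
    a ≤ b := by nlinarith

/-- From `a² < b²` with `a` nonnegative and `b` positive, conclude `a < b`. -/
lemma aux_lt_of_sq_lt (a b : ℝ) (ha : 0 ≤ a) (hb : 0 < b) (h : a ^ 2 < b ^ 2) :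
    a < b := by nlinarith

/-- Feasibility forces `ϑ ≥ ϑ₀`. -/
lemma aux_theta_ge (ϑ0 ϑ ν : ℝ) (h0 : 0 < ϑ0) (hν : ϑ0 ≤ ν)
    (h : ϑ ^ 2 - 2 * ϑ * ν ≤ ϑ0 ^ 2 - 2 * ϑ0 * ν) : ϑ0 ≤ ϑ := by
  by_contra hc
  push_neg at hc
  nlinarith [mul_pos (sub_pos.mpr hc) (show 0 < 2 * ν - ϑ - ϑ0 by linarith)]

lemma aux_one_sub_sq (ν : ℝ) (h1 : ν ≤ 1) (h0 : 0 < ν) : (0:ℝ) ≤ 1 - ν ^ 2 := by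
  nlinarith

lemma aux_sq_lt_one (a : ℝ) (h0 : 0 ≤ a) (h1 : a < 1) : a ^ 2 < 1 := by nlinarith

lemma aux_sq_ge_one (ς : ℝ) (h : 1 < ς) : (0:ℝ) ≤ ς ^ 2 - 1 := by nlinarith

/-- Discriminant nonnegativity. -/
lemma aux_disc (ς ϱ r ν ϖ : ℝ) (hς : 1 ≤ ς) (hϱ : 0 ≤ ϱ) (hr : 0 ≤ r)
    (hr2 : r ^ 2 = 1 - ν ^ 2) (hϖ : ϖ = ς * r + ϱ) :
    0 ≤ ν ^ 2 - 1 + ϖ ^ 2 := by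
  have h1 : 0 ≤ (ς ^ 2 - 1) * r ^ 2 :=
    mul_nonneg (by nlinarith) (sq_nonneg r)
  have h2 : 0 ≤ ς * ϱ * r := by positivity
  have hϖ2 : ϖ ^ 2 = ς ^ 2 * r ^ 2 + 2 * (ς * ϱ * r) + ϱ ^ 2 := by rw [hϖ]; ring
  nlinarith [sq_nonneg ϱ]

set_option maxHeartbeats 1000000 in
/-- Lemma 2: the minimum over the feasible region is attained at the corner
point (ϑ_min², ϑ_min). -/
theorem corner_minimum (ς ϱ : ℝ) (hς : 1 < ς) (hϱ0 : 0 ≤ ϱ) (hϱ1 : ϱ < 1)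
    (ν₀ : ℝ) (hν₀ : ν₀ = Real.sqrt (1 - ((1 - ϱ) / ς) ^ 2))
    (ν : ℝ) (hν : ν ∈ Set.Ioc ν₀ 1)
    (ϖ : ℝ) (hϖ : ϖ = ς * Real.sqrt (1 - ν ^ 2) + ϱ)
    (ϑmin : ℝ) (hϑmin : ϑmin = ν - Real.sqrt (ν ^ 2 - 1 + ϖ ^ 2))
    (ξ ϑ : ℝ) (hξ : ξ ≥ ϑ ^ 2) (hline : 1 + ξ - 2 * ϑ * ν ≤ ϖ ^ 2) :
    (1 + ϑmin ^ 2 - (ς * (1 - ϑmin) + ϱ) ^ 2) / (2 * ϑmin) ≤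
      (1 + ξ - (ς * Real.sqrt (1 + ξ - 2 * ϑ) + ϱ) ^ 2) / (2 * ϑ) := by
  obtain ⟨hνlt, hν1⟩ := hν
  have hςpos : (0:ℝ) < ς := by linarith
  -- basic facts about ν
  have hν0nonneg : 0 ≤ ν₀ := hν₀ ▸ Real.sqrt_nonneg _
  have hνpos : 0 < ν := lt_of_le_of_lt hν0nonneg hνlt
  have hν2 : (0:ℝ) ≤ 1 - ν ^ 2 := aux_one_sub_sq ν hν1 hνpos
  set r : ℝ := Real.sqrt (1 - ν ^ 2) with hr
  have hr0 : 0 ≤ r := Real.sqrt_nonneg _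
  have hr2 : r ^ 2 = 1 - ν ^ 2 := Real.sq_sqrt hν2
  have hϖ0 : 0 ≤ ϖ := by
    rw [hϖ]
    have : 0 ≤ ς * r := mul_nonneg hςpos.le hr0
    linarith
  -- ϖ < 1
  have hbase : 0 < (1 - ϱ) / ς := div_pos (by linarith) hςpos
  have harg : 0 ≤ 1 - ((1 - ϱ) / ς) ^ 2 := by
    have h1 : (1 - ϱ) / ς < 1 := by
      rw [div_lt_one hςpos]; linarith
    linarith [aux_sq_lt_one _ hbase.le h1]
  have hν02 : ν₀ ^ 2 = 1 - ((1 - ϱ) / ς) ^ 2 := by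
    rw [hν₀]; exact Real.sq_sqrt harg
  have hϖ1 : ϖ < 1 := by
    have hνsq : ν₀ ^ 2 < ν ^ 2 := by
      have := mul_self_lt_mul_self hν0nonneg hνlt
      calc ν₀ ^ 2 = ν₀ * ν₀ := sq ν₀
        _ < ν * ν := this
        _ = ν ^ 2 := (sq ν).symm
    have hrsq : r ^ 2 < ((1 - ϱ) / ς) ^ 2 := by
      rw [hr2]; linarith
    have hrlt : r < (1 - ϱ) / ς := aux_lt_of_sq_lt r _ hr0 hbase hrsq
    have : r * ς < 1 - ϱ := (lt_div_iff₀ hςpos).mp hrlt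
    rw [hϖ]; linarith [this, mul_comm r ς]
  -- discriminant and ϑmin
  have hD : 0 ≤ ν ^ 2 - 1 + ϖ ^ 2 := aux_disc ς ϱ r ν ϖ hς.le hϱ0 hr0 hr2 hϖ
  set d : ℝ := Real.sqrt (ν ^ 2 - 1 + ϖ ^ 2) with hd
  have hd0 : 0 ≤ d := Real.sqrt_nonneg _
  have hd2 : d ^ 2 = ν ^ 2 - 1 + ϖ ^ 2 := Real.sq_sqrt hD
  have hdν : d < ν := by
    refine aux_lt_of_sq_lt d ν hd0 hνpos ?_
    have hϖsq : ϖ ^ 2 < 1 := aux_sq_lt_one ϖ hϖ0 hϖ1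
    linarith [hd2]
  have hϑ0pos : 0 < ϑmin := by rw [hϑmin]; linarith
  have hϑ0ν : ϑmin ≤ ν := by rw [hϑmin]; linarith
  have hϑ01 : ϑmin ≤ 1 := le_trans hϑ0ν hν1
  -- the key quadratic identity
  have hdd : d = ν - ϑmin := by rw [hϑmin]; ring
  rw [hdd] at hd2
  have key : ϖ ^ 2 = 1 + ϑmin ^ 2 - 2 * ϑmin * ν := by linear_combination -hd2
  -- ϑ is at least ϑmin, hence positive
  have hϑge : ϑmin ≤ ϑ :=
    aux_theta_ge ϑmin ϑ ν hϑ0pos hϑ0ν (by linarith)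
  have hϑpos : 0 < ϑ := lt_of_lt_of_le hϑ0pos hϑge
  -- square roots on the feasible region
  have hu0 : 0 ≤ 1 + ξ - 2 * ϑ := by linarith [sq_nonneg (1 - ϑ), hξ]
  have hw0 : 1 + ξ - 2 * ϑ ≤ ϖ ^ 2 - 2 * ϑ * (1 - ν) := by linarith
  set su : ℝ := Real.sqrt (1 + ξ - 2 * ϑ) with hsu
  have hsu0 : 0 ≤ su := Real.sqrt_nonneg _
  have hsu2 : su ^ 2 = 1 + ξ - 2 * ϑ := Real.sq_sqrt hu0
  set s : ℝ := Real.sqrt (ϖ ^ 2 - 2 * ϑ * (1 - ν)) with hs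
  have hs0 : 0 ≤ s := Real.sqrt_nonneg _
  have hs2 : s ^ 2 = ϖ ^ 2 - 2 * ϑ * (1 - ν) := Real.sq_sqrt (le_trans hu0 hw0)
  have hsus : su ≤ s := by rw [hsu, hs]; exact Real.sqrt_le_sqrt hw0
  -- ϖ² - 2ϑmin(1-ν) = (1-ϑmin)²
  have hs0id : ϖ ^ 2 - 2 * ϑmin * (1 - ν) = (1 - ϑmin) ^ 2 := by
    rw [key]; ring
  -- cross inequality ϑmin·s ≤ ϑ·(1-ϑmin)
  have hcross : ϑmin * s ≤ ϑ * (1 - ϑmin) := by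
    refine aux_le_of_sq_le _ _ (mul_nonneg hϑ0pos.le hs0)
      (mul_nonneg hϑpos.le (by linarith)) ?_
    have hident : (ϑ * (1 - ϑmin)) ^ 2 - (ϑmin * s) ^ 2 =
        (ϑ - ϑmin) * ((ϑ + ϑmin) * ϖ ^ 2 - 2 * ϑ * ϑmin * (1 - ν)) := by
      linear_combination (-ϑmin ^ 2) * hs2 - ϑ ^ 2 * hs0id
    have hϖge : 2 * ϑmin * (1 - ν) ≤ ϖ ^ 2 := by
      have := sq_nonneg (1 - ϑmin); linarith [hs0id]
    have h1 : 0 ≤ (ϑ - ϑmin) * ((ϑ + ϑmin) * ϖ ^ 2 - 2 * ϑ * ϑmin * (1 - ν)) := by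
      refine mul_nonneg (by linarith) ?_
      have h2 : ϑ * (2 * ϑmin * (1 - ν)) ≤ ϑ * ϖ ^ 2 :=
        mul_le_mul_of_nonneg_left hϖge hϑpos.le
      have h3 : 0 ≤ ϑmin * ϖ ^ 2 := mul_nonneg hϑ0pos.le (sq_nonneg ϖ)
      linarith [h2, h3]
    linarith [hident]
  -- Step A: for fixed ϑ, the numerator decreases as ξ increases to the line
  have stepA : ϖ ^ 2 + 2 * ϑ * ν - (ς * s + ϱ) ^ 2 ≤
      1 + ξ - (ς * su + ϱ) ^ 2 := by
    have hident : (1 + ξ - (ς * su + ϱ) ^ 2) -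
        (ϖ ^ 2 + 2 * ϑ * ν - (ς * s + ϱ) ^ 2) =
        (ς ^ 2 - 1) * ((ϖ ^ 2 - 2 * ϑ * (1 - ν)) - (1 + ξ - 2 * ϑ)) +
          2 * ς * ϱ * (s - su) := by
      linear_combination (- ς ^ 2) * hsu2 + ς ^ 2 * hs2
    have h1 : 0 ≤ (ς ^ 2 - 1) * ((ϖ ^ 2 - 2 * ϑ * (1 - ν)) - (1 + ξ - 2 * ϑ)) :=
      mul_nonneg (aux_sq_ge_one ς hς) (by linarith)
    have h2 : 0 ≤ 2 * ς * ϱ * (s - su) := by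
      have : 0 ≤ s - su := by linarith
      positivity
    linarith [hident]
  -- Step B: monotonicity in ϑ
  have stepB : ϑ * (1 + ϑmin ^ 2 - (ς * (1 - ϑmin) + ϱ) ^ 2) ≤
      ϑmin * (ϖ ^ 2 + 2 * ϑ * ν - (ς * s + ϱ) ^ 2) := by
    have hident : ϑmin * (ϖ ^ 2 + 2 * ϑ * ν - (ς * s + ϱ) ^ 2) -
        ϑ * (1 + ϑmin ^ 2 - (ς * (1 - ϑmin) + ϱ) ^ 2) =
        (ϑ - ϑmin) * ((ς ^ 2 - 1) * ϖ ^ 2 + ϱ ^ 2) +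
          2 * ς * ϱ * (ϑ * (1 - ϑmin) - ϑmin * s) := by
      linear_combination (-ϑmin * ς ^ 2) * hs2 + (ϑ * (1 - ς ^ 2)) * key
    have h1 : 0 ≤ (ϑ - ϑmin) * ((ς ^ 2 - 1) * ϖ ^ 2 + ϱ ^ 2) := by
      refine mul_nonneg (by linarith) ?_
      have : 0 ≤ (ς ^ 2 - 1) * ϖ ^ 2 := mul_nonneg (aux_sq_ge_one ς hς) (sq_nonneg ϖ)
      linarith [sq_nonneg ϱ]
    have h2 : 0 ≤ 2 * ς * ϱ * (ϑ * (1 - ϑmin) - ϑmin * s) := by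
      have : 0 ≤ ϑ * (1 - ϑmin) - ϑmin * s := by linarith
      positivity
    linarith [hident]
  -- combine
  rw [div_le_div_iff₀ (by linarith) (by linarith)]
  have hA := mul_le_mul_of_nonneg_left stepA hϑ0pos.le
  linarith [hA, stepB]
end

section
/- Let ς > 1, ϱ ∈ [0,1), and ν₀ = √(1 − ((1−ϱ)/ς)²). Define ϑ_min(ν) = ν − √(ν² − 1 + (ς·√(1−ν²) + ϱ)²) for ν ∈ [ν₀, 1]. Then ϑ_min is strictly increasing on [ν₀, 1], ϑ_min(ν₀) = 0, and ϑ_min(1) = 1 − ϱ. -/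
/-!
Put `s = √(1 - ν²)`. On `[0, 1]` the radicand equals `(ς² - 1) s² + 2ςϱ s + ϱ²`, a
nondecreasing function of `s ≥ 0`, while `s` decreases in `ν`; so `ϑ_min = ν - √(radicand)`
is the strictly increasing `ν` minus a nonincreasing term. At `ν₀` one has `s = (1 - ϱ)/ς`,
hence `ςs + ϱ = 1` and the radicand collapses to `ν₀²`.
-/

open Real Set

lemma antitoneOn_sqrt_one_sub_sq : AntitoneOn (fun ν : ℝ => √(1 - ν ^ 2)) (Ici 0) :=
  fun _ ha _ _ hab => Real.sqrt_le_sqrt (by nlinarith [mem_Ici.mp ha])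

lemma sqrt_one_sub_sq_sqrt_one_sub_sq {r : ℝ} (hr0 : 0 ≤ r) (hr1 : r ≤ 1) :
    √(1 - √(1 - r ^ 2) ^ 2) = r := by
  rw [Real.sq_sqrt (by nlinarith), sub_sub_cancel, Real.sqrt_sq hr0]

lemma sq_sub_one_add_sq_eq {ν : ℝ} (hν : ν ^ 2 ≤ 1) (ς ϱ : ℝ) :
    ν ^ 2 - 1 + (ς * √(1 - ν ^ 2) + ϱ) ^ 2
      = (ς ^ 2 - 1) * √(1 - ν ^ 2) ^ 2 + 2 * ς * ϱ * √(1 - ν ^ 2) + ϱ ^ 2 := by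
  linear_combination Real.sq_sqrt (sub_nonneg.mpr hν)

lemma antitoneOn_sq_sub_one_add_sq {ς ϱ : ℝ} (hς : 1 ≤ ς) (hϱ : 0 ≤ ϱ) :
    AntitoneOn (fun ν : ℝ => ν ^ 2 - 1 + (ς * √(1 - ν ^ 2) + ϱ) ^ 2) (Icc 0 1) := by
  intro a ha b hb hab
  have hsq : ∀ ν ∈ Icc (0 : ℝ) 1, ν ^ 2 ≤ 1 := fun ν hν => by nlinarith [hν.1, hν.2]
  have hs : √(1 - b ^ 2) ≤ √(1 - a ^ 2) := antitoneOn_sqrt_one_sub_sq ha.1 hb.1 hab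
  have hς2 : 0 ≤ ς ^ 2 - 1 := by nlinarith
  simp only [sq_sub_one_add_sq_eq (hsq a ha), sq_sub_one_add_sq_eq (hsq b hb)]
  gcongr

/-- Lemma 3: ϑ_min(ν) is strictly increasing on [ν₀, 1], with
ϑ_min(ν₀) = 0 and ϑ_min(1) = 1 − ϱ. -/
theorem thetaMin_strictMono (ς ϱ : ℝ) (hς : 1 < ς) (hϱ0 : 0 ≤ ϱ) (hϱ1 : ϱ < 1)
    (ν₀ : ℝ) (hν₀ : ν₀ = Real.sqrt (1 - ((1 - ϱ) / ς) ^ 2))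
    (ϑmin : ℝ → ℝ)
    (hϑmin : ∀ ν, ϑmin ν =
      ν - Real.sqrt (ν ^ 2 - 1 + (ς * Real.sqrt (1 - ν ^ 2) + ϱ) ^ 2)) :
    StrictMonoOn ϑmin (Set.Icc ν₀ 1) ∧ ϑmin ν₀ = 0 ∧ ϑmin 1 = 1 - ϱ := by
  have hςpos : 0 < ς := by linarith
  have hν₀nonneg : 0 ≤ ν₀ := hν₀ ▸ Real.sqrt_nonneg _
  refine ⟨fun a ha b hb hab => ?_, ?_, ?_⟩
  · have hsub : Icc ν₀ 1 ⊆ Icc 0 1 := Icc_subset_Icc_left hν₀nonneg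
    have hrad := antitoneOn_sq_sub_one_add_sq hς.le hϱ0 (hsub ha) (hsub hb) hab.le
    rw [hϑmin, hϑmin]
    linarith [Real.sqrt_le_sqrt hrad]
  · have hr0 : 0 ≤ (1 - ϱ) / ς := div_nonneg (by linarith) hςpos.le
    have hr1 : (1 - ϱ) / ς ≤ 1 := (div_le_one hςpos).mpr (by linarith)
    have hς_mul : ς * ((1 - ϱ) / ς) + ϱ = 1 := by field_simp; ring
    rw [hϑmin, hν₀, sqrt_one_sub_sq_sqrt_one_sub_sq hr0 hr1, hς_mul, ← hν₀, one_pow,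
      sub_add_cancel, Real.sqrt_sq hν₀nonneg, sub_self]
  · simp [hϑmin, Real.sqrt_sq hϱ0]
end

section
/- Let ς > 1 and ϱ ≥ 0. Define M(a) = 1 + ((1−a)² − (ς·(1−a) + ϱ)²)/(2a) for a > 0. Then M is strictly increasing on (0, 1], i.e., 0 < a < b ≤ 1 implies M(a) < M(b). -/
/-- Lemma 4: M(a) = 1 + ((1−a)² − (ς(1−a) + ϱ)²)/(2a) is strictly increasing on (0,1]. -/
theorem M_strictMono (ς ϱ : ℝ) (hς : 1 < ς) (hϱ : 0 ≤ ϱ)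
    (M : ℝ → ℝ)
    (hM : ∀ a, a > 0 → M a = 1 + ((1 - a) ^ 2 - (ς * (1 - a) + ϱ) ^ 2) / (2 * a)) :
    ∀ a b : ℝ, 0 < a → a < b → b ≤ 1 → M a < M b := by
  intro a b ha hab hb1
  rw [hM a ha, hM b (ha.trans hab)]
  have h2a : 0 < 2 * a := by linarith
  have h2b : 0 < 2 * b := by linarith
  have hab1 : a * b < 1 := by nlinarith
  rw [add_lt_add_iff_left, div_lt_div_iff₀ h2a h2b]
  have h1 : 0 < (ς ^ 2 - 1) * (1 - a * b) :=
    mul_pos (by nlinarith) (by linarith)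
  have h2 : 0 < b - a := by linarith
  nlinarith [mul_pos h2 h1, mul_nonneg (mul_nonneg h2.le hϱ) hϱ,
    mul_nonneg (mul_nonneg h2.le (by linarith : (0:ℝ) ≤ ς)) hϱ]
end

section
/- Let ς > 1, ϱ ∈ [0,1), and ν₀ = √(1 − ((1−ϱ)/ς)²). For ν ∈ (ν₀, 1], set ϑ_min(ν) = ν − √(ν² − 1 + (ς·√(1−ν²) + ϱ)²) and F(ν) = 1 + ((1−ϑ_min(ν))² − (ς·(1−ϑ_min(ν)) + ϱ)²)/(2·ϑ_min(ν)). Then F is strictly increasing on (ν₀, 1]; consequently F₀(ν) = max(F(ν), 0) is nondecreasing on (ν₀, 1]. -/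
set_option maxHeartbeats 1600000 in
/-- Proposition 4: F is strictly increasing on (ν₀, 1], hence F₀ = max(F, 0)
is nondecreasing there. -/
theorem F_strictMono (ς ϱ : ℝ) (hς : 1 < ς) (hϱ0 : 0 ≤ ϱ) (hϱ1 : ϱ < 1)
    (ν₀ : ℝ) (hν₀ : ν₀ = Real.sqrt (1 - ((1 - ϱ) / ς) ^ 2))
    (ϑmin : ℝ → ℝ)
    (hϑmin : ∀ ν, ϑmin ν =
      ν - Real.sqrt (ν ^ 2 - 1 + (ς * Real.sqrt (1 - ν ^ 2) + ϱ) ^ 2))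
    (F : ℝ → ℝ)
    (hF : ∀ ν, F ν =
      1 + ((1 - ϑmin ν) ^ 2 - (ς * (1 - ϑmin ν) + ϱ) ^ 2) / (2 * ϑmin ν)) :
    StrictMonoOn F (Set.Ioc ν₀ 1) ∧
    MonotoneOn (fun ν => max (F ν) 0) (Set.Ioc ν₀ 1) := by
  have hςpos : (0:ℝ) < ς := by linarith
  set s₀ : ℝ := (1 - ϱ) / ς with hs₀def
  have hs₀pos : 0 < s₀ := div_pos (by linarith) hςpos
  have hs₀lt1 : s₀ < 1 := (div_lt_one hςpos).2 (by linarith)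
  have hν₀sq : ν₀ ^ 2 = 1 - s₀ ^ 2 := by
    rw [hν₀, Real.sq_sqrt]; nlinarith
  have hν₀pos : 0 < ν₀ := by
    rw [hν₀]; apply Real.sqrt_pos.2; nlinarith
  -- per-point facts
  have key : ∀ ν ∈ Set.Ioc ν₀ 1,
      0 < ϑmin ν ∧ ϑmin ν ≤ 1 ∧
      ϑmin ν = ν - Real.sqrt ((ς * Real.sqrt (1 - ν ^ 2) + ϱ) ^ 2
        - Real.sqrt (1 - ν ^ 2) ^ 2) := by
    rintro ν ⟨hν1, hν2⟩
    set s : ℝ := Real.sqrt (1 - ν ^ 2) with hsdef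
    have hνpos : 0 < ν := lt_trans hν₀pos hν1
    have hν2sq : ν ^ 2 ≤ 1 := by nlinarith
    have hs_nonneg : 0 ≤ s := Real.sqrt_nonneg _
    have hs_sq : s ^ 2 = 1 - ν ^ 2 := Real.sq_sqrt (by linarith)
    have hs_lt : s < s₀ := by
      have h1 : 1 - ν ^ 2 < s₀ ^ 2 := by nlinarith
      calc s < Real.sqrt (s₀ ^ 2) := Real.sqrt_lt_sqrt (by nlinarith) h1
        _ = s₀ := Real.sqrt_sq hs₀pos.le
    have hςs : ς * s + ϱ < 1 := by
      have : ς * s < ς * s₀ := by nlinarith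
      have h0 : ς * s₀ = 1 - ϱ := by
        rw [hs₀def]; field_simp
      linarith
    have hςs0 : 0 ≤ ς * s + ϱ := by nlinarith
    set q : ℝ := (ς * s + ϱ) ^ 2 - s ^ 2 with hqdef
    have hq0 : 0 ≤ q := by
      have h1 : 0 ≤ ς * s + ϱ - s := by nlinarith
      have h2 : 0 ≤ ς * s + ϱ + s := by nlinarith
      nlinarith [mul_nonneg h1 h2]
    have hqν : q < ν ^ 2 := by nlinarith
    have hθeq : ϑmin ν = ν - Real.sqrt q := by
      rw [hϑmin]
      congr 1
      congr 1
      rw [hqdef, hs_sq]; ring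
    have hsqlt : Real.sqrt q < ν := by
      calc Real.sqrt q < Real.sqrt (ν ^ 2) := Real.sqrt_lt_sqrt hq0 hqν
        _ = ν := Real.sqrt_sq hνpos.le
    refine ⟨by rw [hθeq]; linarith, ?_, hθeq⟩
    rw [hθeq]
    have := Real.sqrt_nonneg q
    linarith
  have hmono : StrictMonoOn F (Set.Ioc ν₀ 1) := by
    intro a ha b hb hab
    obtain ⟨hθa, hθa1, hθaeq⟩ := key a ha
    obtain ⟨hθb, hθb1, hθbeq⟩ := key b hb
    obtain ⟨ha1, ha2⟩ := ha
    obtain ⟨hb1, hb2⟩ := hb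
    have hapos : 0 < a := lt_trans hν₀pos ha1
    -- θ a < θ b
    set sa : ℝ := Real.sqrt (1 - a ^ 2)
    set sb : ℝ := Real.sqrt (1 - b ^ 2)
    have hsb_nonneg : 0 ≤ sb := Real.sqrt_nonneg _
    have hsa_nonneg : 0 ≤ sa := Real.sqrt_nonneg _
    have hsba : sb ≤ sa := Real.sqrt_le_sqrt (by nlinarith)
    have hsa_sq : sa ^ 2 = 1 - a ^ 2 := Real.sq_sqrt (by nlinarith)
    have hsb_sq : sb ^ 2 = 1 - b ^ 2 := Real.sq_sqrt (by nlinarith)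
    have hqle : (ς * sb + ϱ) ^ 2 - sb ^ 2 ≤ (ς * sa + ϱ) ^ 2 - sa ^ 2 := by
      nlinarith [mul_nonneg (mul_nonneg (show (0:ℝ) ≤ ς ^ 2 - 1 by nlinarith)
          (sub_nonneg.2 hsba)) (show (0:ℝ) ≤ sa + sb by linarith),
        mul_nonneg (mul_nonneg hςpos.le hϱ0) (sub_nonneg.2 hsba)]
    have hsqle : Real.sqrt ((ς * sb + ϱ) ^ 2 - sb ^ 2)
        ≤ Real.sqrt ((ς * sa + ϱ) ^ 2 - sa ^ 2) := Real.sqrt_le_sqrt hqle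
    have hθab : ϑmin a < ϑmin b := by
      rw [hθaeq, hθbeq]; linarith
    -- now compare F values
    rw [hF a, hF b]
    have h2a : 0 < 2 * ϑmin a := by linarith
    have h2b : 0 < 2 * ϑmin b := by linarith
    have hdiv : ((1 - ϑmin a) ^ 2 - (ς * (1 - ϑmin a) + ϱ) ^ 2) / (2 * ϑmin a)
        < ((1 - ϑmin b) ^ 2 - (ς * (1 - ϑmin b) + ϱ) ^ 2) / (2 * ϑmin b) := by
      rw [div_lt_div_iff₀ h2a h2b]
      set ta := ϑmin a
      set tb := ϑmin b
      have h1 : (0:ℝ) < (ς ^ 2 - 1) * ((tb - ta) * ((1 - ta) * tb + (1 - tb))) := by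
        apply mul_pos (by nlinarith)
        apply mul_pos (by linarith)
        nlinarith
      have h2 : (0:ℝ) ≤ ς * ϱ * (tb - ta) :=
        mul_nonneg (mul_nonneg hςpos.le hϱ0) (by linarith)
      have h3 : (0:ℝ) ≤ ϱ * ϱ * (tb - ta) :=
        mul_nonneg (mul_nonneg hϱ0 hϱ0) (by linarith)
      nlinarith [h1, h2, h3]
    linarith
  refine ⟨hmono, ?_⟩
  intro a ha b hb hab
  rcases eq_or_lt_of_le hab with rfl | h
  · exact le_refl _
  · exact max_le_max (hmono ha hb h).le le_rfl
end

section
/- Let ς ∈ (1, √2] and set β = arctan(1 − √(ς²−1)), so that β ∈ [0, π/4]. Then the set of solutions α ∈ [0, π/2] of the equation sin(α) + (1 − √(ς²−1))·cos(α) = 1 is exactly {π/2, π/2 − 2β}. Moreover sin(π/2 − 2β) = cos(2β) = (1 − ς² + 2√(ς²−1)) / (1 + ς² − 2√(ς²−1)). -/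
open Real

/-- Fixed points in the noiseless case: solutions of
sin α + (1 − √(ς²−1)) cos α = 1 on [0, π/2]. -/
theorem noiseless_fixed_points (ς : ℝ) (h1 : 1 < ς) (h2 : ς ≤ Real.sqrt 2)
    (β : ℝ) (hβ : β = Real.arctan (1 - Real.sqrt (ς ^ 2 - 1))) :
    β ∈ Set.Icc 0 (π / 4) ∧
    {α | α ∈ Set.Icc 0 (π / 2) ∧
        Real.sin α + (1 - Real.sqrt (ς ^ 2 - 1)) * Real.cos α = 1}
      = {π / 2, π / 2 - 2 * β} ∧
    Real.sin (π / 2 - 2 * β) = Real.cos (2 * β) ∧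
    Real.cos (2 * β) =
      (1 - ς ^ 2 + 2 * Real.sqrt (ς ^ 2 - 1)) / (1 + ς ^ 2 - 2 * Real.sqrt (ς ^ 2 - 1)) := by
  have hpi := Real.pi_pos
  have h0 : (0:ℝ) < ς := lt_trans one_pos h1
  have hs1 : 1 < ς ^ 2 := by nlinarith
  have hsqrt2 : Real.sqrt 2 * Real.sqrt 2 = 2 := Real.mul_self_sqrt (by norm_num)
  have hs2 : ς ^ 2 ≤ 2 := by nlinarith [Real.sqrt_nonneg 2]
  set t := Real.sqrt (ς ^ 2 - 1) with ht_def
  have ht_sq : t ^ 2 = ς ^ 2 - 1 := Real.sq_sqrt (by linarith)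
  have ht_pos : 0 < t := Real.sqrt_pos.mpr (by linarith)
  have ht_le : t ≤ 1 := by nlinarith
  set c := 1 - t with hc_def
  have hc0 : 0 ≤ c := by linarith
  have hc1 : c < 1 := by linarith
  have hβ0 : 0 ≤ β := by rw [hβ, ← Real.arctan_zero]; exact Real.arctan_strictMono.monotone hc0
  have hβlt : β < π / 4 := by
    rw [hβ, ← Real.arctan_one]
    exact Real.arctan_strictMono hc1
  have htan : Real.tan β = c := by rw [hβ, Real.tan_arctan]
  have hcosβ : 0 < Real.cos β :=
    Real.cos_pos_of_mem_Ioo ⟨by linarith, by linarith⟩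
  have hcc : c * Real.cos β = Real.sin β := by
    rw [← htan, Real.tan_mul_cos hcosβ.ne']
  have key : ∀ α : ℝ, (Real.sin α + c * Real.cos α = 1) ↔
      Real.sin (α + β) = Real.sin (π / 2 - β) := by
    intro α
    rw [Real.sin_pi_div_two_sub, Real.sin_add]
    constructor
    · intro h
      linear_combination Real.cos β * h - Real.cos α * hcc
    · intro h
      have h2 : (Real.sin α + c * Real.cos α - 1) * Real.cos β = 0 := by
        linear_combination h + Real.cos α * hcc
      rcases mul_eq_zero.mp h2 with h3 | h3
      · linarith
      · exact absurd h3 hcosβ.ne'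
  refine ⟨⟨hβ0, by linarith⟩, ?_, Real.sin_pi_div_two_sub _, ?_⟩
  · ext α
    simp only [Set.mem_setOf_eq, Set.mem_Icc, Set.mem_insert_iff, Set.mem_singleton_iff]
    constructor
    · rintro ⟨⟨hα0, hα1⟩, heq⟩
      have hs := (key α).mp heq
      rcases le_or_gt (α + β) (π / 2) with hle | hlt
      · right
        have := Real.injOn_sin ⟨by linarith, hle⟩
          ⟨by linarith, by linarith⟩ hs
        linarith
      · left
        have hs' : Real.sin (π - (α + β)) = Real.sin (π / 2 - β) := by
          rw [Real.sin_pi_sub]; exact hs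
        have := Real.injOn_sin ⟨by linarith, by linarith⟩
          ⟨by linarith, by linarith⟩ hs'
        linarith
    · rintro (rfl | rfl)
      · exact ⟨⟨by linarith, le_rfl⟩, by simp⟩
      · refine ⟨⟨by linarith, by linarith⟩, (key _).mpr ?_⟩
        rw [show π / 2 - 2 * β + β = π / 2 - β by ring]
  · have hx : 1 + c ^ 2 = 1 + ς ^ 2 - 2 * t := by
      rw [hc_def]; nlinarith [ht_sq]
    rw [Real.cos_two_mul, hβ, Real.cos_sq_arctan, hx]
    have hden : (0:ℝ) < 1 + ς ^ 2 - 2 * t := by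
      rw [← hx]; positivity
    field_simp
    nlinarith [ht_sq]
end

section
/- Let b > 0 be a real constant and define φ(α) = (cos α + sin α − 1)/(cos α + b). Then φ is strictly concave on the closed interval [0, π/2]. -/
open Real Set

/-!
Away from the zeros of `cos α + b`, `φ` is smooth, and after using `sin² + cos² = 1` its second
derivative is `-(b (b + 2) sin α + (b + 1) (1 - sin α)² + b cos α (b + 1 - sin α)) / (cos α + b)³`.
On `(0, π/2)` we have `0 < sin α ≤ 1` and `0 ≤ cos α`, so every term of the numerator is
nonnegative and the first is positive: `φ'' < 0` on the interior, hence strict concavity.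
-/

lemma strictConcaveOn_of_hasDerivAt2_neg {D : Set ℝ} (hD : Convex ℝ D) {f f' f'' : ℝ → ℝ}
    (hf : ContinuousOn f D) (hf' : ∀ x ∈ interior D, HasDerivAt f (f' x) x)
    (hf'' : ∀ x ∈ interior D, HasDerivAt f' (f'' x) x)
    (hf''₀ : ∀ x ∈ interior D, f'' x < 0) : StrictConcaveOn ℝ D f := by
  have hanti : StrictAntiOn f' (interior D) := by
    refine strictAntiOn_of_hasDerivWithinAt_neg (f' := f'') hD.interior
      (fun x hx => (hf'' x hx).continuousAt.continuousWithinAt) ?_ ?_ <;>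
    rw [interior_interior]
    exacts [fun x hx => (hf'' x hx).hasDerivWithinAt, hf''₀]
  exact (hanti.congr fun x hx => (hf' x hx).deriv.symm).strictConcaveOn_of_deriv hD hf

noncomputable def phi (b α : ℝ) : ℝ := (cos α + sin α - 1) / (cos α + b)

noncomputable def phiDeriv (b α : ℝ) : ℝ := (1 + b * cos α - (b + 1) * sin α) / (cos α + b) ^ 2

noncomputable def phiDeriv2 (b α : ℝ) : ℝ :=
  -(b * (b + 2) * sin α + (b + 1) * (1 - sin α) ^ 2 + b * cos α * (b + 1 - sin α)) /
    (cos α + b) ^ 3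

variable {b x : ℝ}

lemma hasDerivAt_phi (hx : cos x + b ≠ 0) : HasDerivAt (phi b) (phiDeriv b x) x := by
  have hN : HasDerivAt (fun α => cos α + sin α - 1) (-sin x + cos x) x :=
    ((hasDerivAt_cos x).add (hasDerivAt_sin x)).sub_const 1
  have hD : HasDerivAt (fun α => cos α + b) (-sin x) x := (hasDerivAt_cos x).add_const b
  refine (hN.div hD hx).congr_deriv ?_
  rw [phiDeriv]
  field_simp
  linear_combination sin_sq_add_cos_sq x

lemma hasDerivAt_phiDeriv (hx : cos x + b ≠ 0) : HasDerivAt (phiDeriv b) (phiDeriv2 b x) x := by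
  have hN : HasDerivAt (fun α => 1 + b * cos α - (b + 1) * sin α)
      (b * -sin x - (b + 1) * cos x) x :=
    (((hasDerivAt_cos x).const_mul b).const_add 1).sub ((hasDerivAt_sin x).const_mul (b + 1))
  have hD : HasDerivAt (fun α => (cos α + b) ^ 2) (2 * (cos x + b) * -sin x) x := by
    simpa using ((hasDerivAt_cos x).add_const b).fun_pow 2
  refine (hN.div hD (pow_ne_zero 2 hx)).congr_deriv ?_
  rw [phiDeriv2]
  field_simp
  linear_combination -(b + 1) * sin_sq_add_cos_sq x

lemma cos_add_const_pos (hb : 0 < b) (hx : x ∈ Icc 0 (π / 2)) : 0 < cos x + b := by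
  have : 0 ≤ cos x := cos_nonneg_of_mem_Icc ⟨by linarith [hx.1, pi_pos], hx.2⟩
  linarith

lemma phiDeriv2_neg (hb : 0 < b) (hx : x ∈ Ioo 0 (π / 2)) : phiDeriv2 b x < 0 := by
  have hs : 0 < sin x := sin_pos_of_pos_of_lt_pi hx.1 (by linarith [hx.2, pi_pos])
  have hc : 0 ≤ cos x := cos_nonneg_of_mem_Icc ⟨by linarith [hx.1, pi_pos], hx.2.le⟩
  have hs1 : sin x ≤ 1 := sin_le_one x
  refine div_neg_of_neg_of_pos (neg_neg_of_pos ?_) (pow_pos (by linarith) 3)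
  have : 0 ≤ b * cos x * (b + 1 - sin x) := by
    have : 0 ≤ b + 1 - sin x := by linarith
    positivity
  positivity

/-- Lemma 5: φ(α) = (cos α + sin α − 1)/(cos α + b) is strictly concave on [0, π/2]. -/
theorem phi_strictConcave (b : ℝ) (hb : 0 < b) :
    StrictConcaveOn ℝ (Set.Icc 0 (π / 2))
      (fun α => (Real.cos α + Real.sin α - 1) / (Real.cos α + b)) := by
  have hpos : ∀ x ∈ Icc 0 (π / 2), cos x + b ≠ 0 := fun x hx => (cos_add_const_pos hb hx).ne'
  refine strictConcaveOn_of_hasDerivAt2_neg (f' := phiDeriv b) (f'' := phiDeriv2 b)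
    (convex_Icc _ _)
    (fun x hx => (hasDerivAt_phi (hpos x hx)).continuousAt.continuousWithinAt) ?_ ?_ ?_ <;>
  rw [interior_Icc]
  exacts [fun x hx => hasDerivAt_phi (hpos x (Ioo_subset_Icc_self hx)),
    fun x hx => hasDerivAt_phiDeriv (hpos x (Ioo_subset_Icc_self hx)),
    fun x hx => phiDeriv2_neg hb hx]
end

section
/- Let b > 0 be a real constant and define ψ(α) = (cos α + b)/(cos α + sin α − 1). Then ψ is convex on the open interval (0, π/2). -/
/-!
With `t = α / 2` one has `ψ(α) = 1/2 + (1 + b)/2 · tan (π/2 - t) + b/2 · tan (t + π/4)`. Both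
tangents are taken at affine functions of `α` with values in `[0, π/2)`, where `tan` is convex
because its derivative `1 / cos²` increases; so `ψ` is a nonnegative combination of convex functions.
-/

open Real Set

theorem Real.convexOn_tan : ConvexOn ℝ (Ico 0 (π / 2)) tan := by
  refine MonotoneOn.convexOn_of_deriv (convex_Ico _ _)
    (continuousOn_tan_Ioo.mono fun x hx => ⟨by linarith [hx.1, pi_pos], hx.2⟩) ?_ ?_
  · rw [interior_Ico]
    exact fun x hx => (differentiableAt_tan_of_mem_Ioo
      ⟨by linarith [hx.1, pi_pos], hx.2⟩).differentiableWithinAt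
  · rw [interior_Ico]
    intro x hx y hy hxy
    have hcos : cos y ≤ cos x :=
      cos_le_cos_of_nonneg_of_le_pi hx.1.le (by linarith [hy.2, pi_pos]) hxy
    have hcos_pos : 0 < cos y := cos_pos_of_mem_Ioo ⟨by linarith [hy.1, pi_pos], hy.2⟩
    simp only [deriv_tan]
    gcongr

theorem ConvexOn.comp_mul_add {f : ℝ → ℝ} {s t : Set ℝ} (hf : ConvexOn ℝ t f)
    (hs : Convex ℝ s) (m q : ℝ) (hst : MapsTo (fun x => m * x + q) s t) :
    ConvexOn ℝ s fun x => f (m * x + q) := by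
  refine ⟨hs, fun x hx y hy a c ha hc hac => ?_⟩
  have hlin : m * (a • x + c • y) + q = a • (m * x + q) + c • (m * y + q) := by
    simp only [smul_eq_mul]
    linear_combination (-q) * hac
  simpa only [hlin] using hf.2 (hst hx) (hst hy) ha hc hac

/-- Both sides equal `(c² - s² + b) / (2 s (c - s))` with `s = sin (α / 2)`, `c = cos (α / 2)`. -/
theorem div_cos_add_sin_sub_one_eq (b : ℝ) {α : ℝ} (hα : α ∈ Ioo 0 (π / 2)) :
    (cos α + b) / (cos α + sin α - 1) =
      1 / 2 + (1 + b) / 2 * tan (π / 2 - α / 2) + b / 2 * tan (α / 2 + π / 4) := by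
  obtain ⟨t, rfl⟩ : ∃ t, α = 2 * t := ⟨α / 2, by ring⟩
  obtain ⟨ht0, htπ⟩ : 0 < t ∧ t < π / 4 := ⟨by linarith [hα.1], by linarith [hα.2]⟩
  rw [show 2 * t / 2 = t by ring, cos_two_mul', sin_two_mul]
  have hs : 0 < sin t := sin_pos_of_pos_of_lt_pi ht0 (by linarith [pi_pos])
  have hc : 0 < cos t := cos_pos_of_mem_Ioo ⟨by linarith [pi_pos], by linarith [pi_pos]⟩
  have hsc : sin t < cos t := by
    have := tan_lt_tan_of_lt_of_lt_pi_div_two (by linarith [pi_pos]) (by linarith [pi_pos]) htπ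
    rwa [tan_pi_div_four, tan_eq_sin_div_cos, div_lt_one hc] at this
  have hcot : tan (π / 2 - t) = cos t / sin t := by
    rw [tan_pi_div_two_sub, tan_eq_sin_div_cos, inv_div]
  have htan : tan (t + π / 4) = (cos t + sin t) / (cos t - sin t) := by
    have h2 : (0 : ℝ) < √2 := by positivity
    rw [tan_eq_sin_div_cos, sin_add, cos_add, sin_pi_div_four, cos_pi_div_four,
      div_eq_div_iff (by nlinarith) (by nlinarith)]
    ring
  have hpyth := sin_sq_add_cos_sq t
  have hden : cos t ^ 2 - sin t ^ 2 + 2 * sin t * cos t - 1 = 2 * sin t * (cos t - sin t) := by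
    linear_combination hpyth
  have hcs : cos t - sin t ≠ 0 := by linarith
  rw [hden, hcot, htan]
  field_simp
  linear_combination (-b) * hpyth

/-- Lemma 6: ψ(α) = (cos α + b)/(cos α + sin α − 1) is convex on (0, π/2). -/
theorem psi_convex (b : ℝ) (hb : 0 < b) :
    ConvexOn ℝ (Set.Ioo 0 (π / 2))
      (fun α => (Real.cos α + b) / (Real.cos α + Real.sin α - 1)) := by
  have hcot : ConvexOn ℝ (Ioo 0 (π / 2)) fun α => tan (-(1 / 2) * α + π / 2) :=
    convexOn_tan.comp_mul_add (convex_Ioo _ _) _ _ fun α hα =>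
      ⟨by dsimp only; linarith [hα.2, pi_pos], by dsimp only; linarith [hα.1]⟩
  have htan : ConvexOn ℝ (Ioo 0 (π / 2)) fun α => tan (1 / 2 * α + π / 4) :=
    convexOn_tan.comp_mul_add (convex_Ioo _ _) _ _ fun α hα =>
      ⟨by dsimp only; linarith [hα.1, pi_pos], by dsimp only; linarith [hα.2]⟩
  have hsum := ((convexOn_const (1 / 2 : ℝ) (convex_Ioo 0 (π / 2))).add
    (hcot.smul (by positivity : 0 ≤ (1 + b) / 2))).add (htan.smul (by positivity : 0 ≤ b / 2))
  refine hsum.congr fun α hα => ?_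
  rw [div_cos_add_sin_sub_one_eq b hα]
  simp only [Pi.add_apply, smul_eq_mul]
  ring_nf
end

section
/- Let ς > 1 and ϱ ∈ (0,1), and define υ(α) = ((ς−1)·cos α + ϱ)/(cos α + sin α − 1) − (cos α + sin α − 1)/((ς+1)·cos α + ϱ) for α ∈ (0, π/2). Then: (a) υ is a strictly convex function on (0, π/2); (b) υ(α) → +∞ as α → 0⁺ and υ(α) → +∞ as α → (π/2)⁻; (c) υ has at most two zeros in (0, π/2). -/
/-!
Write `g = cos + sin - 1`, positive on `(0, π/2)` and vanishing at both endpoints. Then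
`υ = (k cos + ϱ) / g - g / (K cos + ϱ)` with `k = ς - 1`, `K = ς + 1`, and the two summands have
derivatives `(c (sin - 1) + ϱ (sin - cos)) / h²` for `(c, h) = (k, g)` and `(K, K cos + ϱ)`. Modulo
`sin² + cos² = 1` the numerators of the second derivatives become visibly positive, so both
summands are strictly convex. At either endpoint the first summand is a positive quantity over
`g → 0⁺` and the second tends to `0`, so `υ → +∞`. A strictly convex function has at most two
zeros, as a third one would make two secant slopes from a common zero both vanish.
-/

open Real Filter Set Topology

theorem StrictConvexOn.encard_setOf_eq_le_two {𝕜 : Type*} [Field 𝕜] [LinearOrder 𝕜]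
    [IsStrictOrderedRing 𝕜] {s : Set 𝕜} {f : 𝕜 → 𝕜} (hf : StrictConvexOn 𝕜 s f) (c : 𝕜) :
    {x | x ∈ s ∧ f x = c}.encard ≤ 2 := by
  set S := {x | x ∈ s ∧ f x = c}
  rcases S.eq_empty_or_nonempty with hS | ⟨a, has, hfa⟩
  · simp [hS]
  have hsub : (S \ {a}).Subsingleton := by
    rintro x ⟨⟨hxs, hfx⟩, hxa⟩ y ⟨⟨hys, hfy⟩, hya⟩
    by_contra hxy
    rcases lt_or_gt_of_ne hxy with hlt | hlt
    · simpa [hfa, hfx, hfy] using hf.secant_strict_mono has hxs hys hxa hya hlt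
    · simpa [hfa, hfx, hfy] using hf.secant_strict_mono has hys hxs hya hxa hlt
  calc S.encard = (S \ {a}).encard + 1 :=
        (encard_sdiff_singleton_add_one (show a ∈ S from ⟨has, hfa⟩)).symm
    _ ≤ 1 + 1 := by gcongr; exact encard_le_one_iff_subsingleton.2 hsub
    _ = 2 := by norm_num

theorem strictConvexOn_of_hasDerivAt2_pos {D : Set ℝ} (hD : Convex ℝ D) (hDo : IsOpen D)
    {f f' f'' : ℝ → ℝ} (hf : ∀ x ∈ D, HasDerivAt f (f' x) x)
    (hf' : ∀ x ∈ D, HasDerivAt f' (f'' x) x) (hf'' : ∀ x ∈ D, 0 < f'' x) :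
    StrictConvexOn ℝ D f := by
  have hderiv : D.EqOn (deriv f) f' := fun x hx => (hf x hx).deriv
  refine StrictMonoOn.strictConvexOn_of_deriv hD
    (fun x hx => (hf x hx).continuousAt.continuousWithinAt) ?_
  rw [hDo.interior_eq]
  refine (strictMonoOn_of_hasDerivWithinAt_pos (f := f') (f' := f'') hD
    (fun x hx => (hf' x hx).continuousAt.continuousWithinAt) ?_ ?_).congr hderiv.symm
  · rw [hDo.interior_eq]; exact fun x hx => (hf' x hx).hasDerivWithinAt
  · rw [hDo.interior_eq]; exact hf''

theorem HasDerivAt.div_sq {N h : ℝ → ℝ} {N' h' x : ℝ} (hN : HasDerivAt N N' x)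
    (hh : HasDerivAt h h' x) (hx : h x ≠ 0) :
    HasDerivAt (fun y => N y / h y ^ 2) ((N' * h x - 2 * N x * h') / h x ^ 3) x := by
  refine (hN.div (hh.pow 2) (pow_ne_zero 2 hx)).congr_deriv ?_
  simp only [Pi.pow_apply]
  field_simp
  push_cast
  ring

theorem Filter.Tendsto.div_sub_div_atTop {α : Type*} {l : Filter α} {N g D : α → ℝ} {a b : ℝ}
    (ha : 0 < a) (hb : b ≠ 0) (hN : Tendsto N l (𝓝 a)) (hg : Tendsto g l (𝓝[>] 0))
    (hD : Tendsto D l (𝓝 b)) : Tendsto (fun x => N x / g x - g x / D x) l atTop := by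
  have hfirst := hN.pos_mul_atTop ha (tendsto_inv_nhdsGT_zero.comp hg)
  have hsecond := (tendsto_nhds_of_tendsto_nhdsWithin hg).div hD hb
  rw [zero_div] at hsecond
  convert hfirst.atTop_add hsecond.neg using 2 with x
  simp [sub_eq_add_neg, div_eq_mul_inv]

namespace Real

theorem one_lt_cos_add_sin {x : ℝ} (hx : x ∈ Ioo 0 (π / 2)) : 1 < cos x + sin x := by
  have hs : 0 < sin x := sin_pos_of_pos_of_lt_pi hx.1 (by linarith [hx.2, pi_pos])
  have hc : 0 < cos x := cos_pos_of_mem_Ioo ⟨by linarith [hx.1, pi_pos], hx.2⟩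
  nlinarith [sin_sq_add_cos_sq x, mul_pos hs hc]

theorem hasDerivAt_cos_add_sin_sub_one (x : ℝ) :
    HasDerivAt (fun α => cos α + sin α - 1) (cos x - sin x) x :=
  (((hasDerivAt_cos x).add (hasDerivAt_sin x)).sub_const 1).congr_deriv (by ring)

theorem hasDerivAt_mul_sin_sub_one_add_mul_sin_sub_cos (k ϱ x : ℝ) :
    HasDerivAt (fun α => k * (sin α - 1) + ϱ * (sin α - cos α))
      (k * cos x + ϱ * (cos x + sin x)) x :=
  ((((hasDerivAt_sin x).sub_const 1).const_mul k).add
    (((hasDerivAt_sin x).sub (hasDerivAt_cos x)).const_mul ϱ)).congr_deriv (by ring)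

variable {k ϱ : ℝ}

theorem strictConvexOn_mul_cos_add_div_cos_add_sin_sub_one (hk : 0 ≤ k) (hϱ : 0 < ϱ) :
    StrictConvexOn ℝ (Ioo 0 (π / 2)) (fun α => (k * cos α + ϱ) / (cos α + sin α - 1)) := by
  refine strictConvexOn_of_hasDerivAt2_pos (convex_Ioo _ _) isOpen_Ioo
    (f' := fun α => (k * (sin α - 1) + ϱ * (sin α - cos α)) / (cos α + sin α - 1) ^ 2)
    (f'' := fun α => ((k * cos α + ϱ * (cos α + sin α)) * (cos α + sin α - 1)
      - 2 * (k * (sin α - 1) + ϱ * (sin α - cos α)) * (cos α - sin α))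
        / (cos α + sin α - 1) ^ 3) (fun x hx => ?_) (fun x hx => ?_) (fun x hx => ?_)
    <;> have hg : 0 < cos x + sin x - 1 := by linarith [one_lt_cos_add_sin hx]
  · have hu : HasDerivAt (fun α => k * cos α + ϱ) (k * -sin x) x :=
      ((hasDerivAt_cos x).const_mul k).add_const ϱ
    refine (hu.div (hasDerivAt_cos_add_sin_sub_one x) hg.ne').congr_deriv ?_
    field_simp
    linear_combination (-k) * sin_sq_add_cos_sq x
  · exact (hasDerivAt_mul_sin_sub_one_add_mul_sin_sub_cos k ϱ x).div_sq
      (hasDerivAt_cos_add_sin_sub_one x) hg.ne'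
  · have hc : 0 < cos x := cos_pos_of_mem_Ioo ⟨by linarith [hx.1, pi_pos], hx.2⟩
    have hs := sin_le_one x
    have hnum : (k * cos x + ϱ * (cos x + sin x)) * (cos x + sin x - 1)
        - 2 * (k * (sin x - 1) + ϱ * (sin x - cos x)) * (cos x - sin x)
        = k * ((1 - sin x) * (1 + cos x - sin x))
          + ϱ * (3 - 2 * cos x * sin x - cos x - sin x) := by
      linear_combination (k + 3 * ϱ) * sin_sq_add_cos_sq x
    have h₁ : 0 ≤ (1 - sin x) * (1 + cos x - sin x) := by nlinarith
    have h₂ : 0 < 3 - 2 * cos x * sin x - cos x - sin x := by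
      nlinarith [sin_sq_add_cos_sq x, sq_nonneg (cos x - sin x)]
    simp only [hnum]
    positivity

theorem strictConvexOn_neg_cos_add_sin_sub_one_div_mul_cos_add (hk : 0 ≤ k) (hϱ : 0 < ϱ) :
    StrictConvexOn ℝ (Ioo 0 (π / 2)) (fun α => -((cos α + sin α - 1) / (k * cos α + ϱ))) := by
  refine strictConvexOn_of_hasDerivAt2_pos (convex_Ioo _ _) isOpen_Ioo
    (f' := fun α => (k * (sin α - 1) + ϱ * (sin α - cos α)) / (k * cos α + ϱ) ^ 2)
    (f'' := fun α => ((k * cos α + ϱ * (cos α + sin α)) * (k * cos α + ϱ)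
      - 2 * (k * (sin α - 1) + ϱ * (sin α - cos α)) * (k * -sin α))
        / (k * cos α + ϱ) ^ 3) (fun x hx => ?_) (fun x hx => ?_) (fun x hx => ?_)
    <;> have hc : 0 < cos x := cos_pos_of_mem_Ioo ⟨by linarith [hx.1, pi_pos], hx.2⟩
    <;> have hD : 0 < k * cos x + ϱ := by positivity
  · have hu : HasDerivAt (fun α => k * cos α + ϱ) (k * -sin x) x :=
      ((hasDerivAt_cos x).const_mul k).add_const ϱ
    refine ((hasDerivAt_cos_add_sin_sub_one x).div hu hD.ne').neg.congr_deriv ?_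
    field_simp
    linear_combination (-k) * sin_sq_add_cos_sq x
  · exact (hasDerivAt_mul_sin_sub_one_add_mul_sin_sub_cos k ϱ x).div_sq
      (((hasDerivAt_cos x).const_mul k).add_const ϱ) hD.ne'
  · have hg := one_lt_cos_add_sin hx
    have hs := sin_le_one x
    have hnum : (k * cos x + ϱ * (cos x + sin x)) * (k * cos x + ϱ)
        - 2 * (k * (sin x - 1) + ϱ * (sin x - cos x)) * (k * -sin x)
        = k ^ 2 * (1 - sin x) ^ 2 + k * ϱ * (cos x * (1 - sin x) + cos x ^ 2 + 2 * sin x ^ 2)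
          + ϱ ^ 2 * (cos x + sin x) := by
      linear_combination k ^ 2 * sin_sq_add_cos_sq x
    have h₁ : 0 ≤ cos x * (1 - sin x) + cos x ^ 2 + 2 * sin x ^ 2 := by nlinarith
    have h₂ : 0 < cos x + sin x := by linarith
    simp only [hnum]
    positivity

end Real

noncomputable def upsilon (ς ϱ α : ℝ) : ℝ :=
  ((ς - 1) * cos α + ϱ) / (cos α + sin α - 1) - (cos α + sin α - 1) / ((ς + 1) * cos α + ϱ)

variable {ς ϱ : ℝ}

theorem strictConvexOn_upsilon (hς : 1 ≤ ς) (hϱ : 0 < ϱ) :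
    StrictConvexOn ℝ (Ioo 0 (π / 2)) (upsilon ς ϱ) := by
  have hsplit : upsilon ς ϱ = (fun α => ((ς - 1) * cos α + ϱ) / (cos α + sin α - 1))
      + fun α => -((cos α + sin α - 1) / ((ς + 1) * cos α + ϱ)) := by
    ext α
    simp only [upsilon, Pi.add_apply, sub_eq_add_neg]
  rw [hsplit]
  exact (strictConvexOn_mul_cos_add_div_cos_add_sin_sub_one (by linarith) hϱ).add
    (strictConvexOn_neg_cos_add_sin_sub_one_div_mul_cos_add (by linarith) hϱ)

theorem tendsto_upsilon_atTop {l : Filter ℝ} {x₀ : ℝ} (hl : l ≤ 𝓝 x₀)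
    (hI : Ioo 0 (π / 2) ∈ l) (hx₀ : cos x₀ + sin x₀ = 1) (hN : 0 < (ς - 1) * cos x₀ + ϱ)
    (hD : (ς + 1) * cos x₀ + ϱ ≠ 0) : Tendsto (upsilon ς ϱ) l atTop := by
  have hcont {φ : ℝ → ℝ} (hφ : Continuous φ) : Tendsto φ l (𝓝 (φ x₀)) :=
    (hφ.tendsto x₀).mono_left hl
  refine Tendsto.div_sub_div_atTop hN hD (hcont (by fun_prop)) ?_ (hcont (by fun_prop))
  refine tendsto_nhdsWithin_iff.2 ⟨?_, ?_⟩
  · simpa [hx₀] using hcont (φ := fun α => cos α + sin α - 1) (by fun_prop)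
  · filter_upwards [hI] with α hα
    exact sub_pos.2 (one_lt_cos_add_sin hα)

theorem upsilon_convex_two_roots_general (ς ϱ : ℝ) (hς : 1 < ς) (hϱ0 : 0 < ϱ)
    (υ : ℝ → ℝ)
    (hυ : ∀ α, υ α =
      ((ς - 1) * Real.cos α + ϱ) / (Real.cos α + Real.sin α - 1)
        - (Real.cos α + Real.sin α - 1) / ((ς + 1) * Real.cos α + ϱ)) :
    StrictConvexOn ℝ (Set.Ioo 0 (π / 2)) υ ∧
    Tendsto υ (nhdsWithin 0 (Set.Ioi 0)) atTop ∧
    Tendsto υ (nhdsWithin (π / 2) (Set.Iio (π / 2))) atTop ∧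
    Set.encard {α | α ∈ Set.Ioo 0 (π / 2) ∧ υ α = 0} ≤ 2 := by
  obtain rfl : υ = upsilon ς ϱ := funext hυ
  have hconv := strictConvexOn_upsilon hς.le hϱ0
  refine ⟨hconv, ?_, ?_, hconv.encard_setOf_eq_le_two 0⟩
  · exact tendsto_upsilon_atTop nhdsWithin_le_nhds (Ioo_mem_nhdsGT pi_div_two_pos) (by simp)
      (by rw [cos_zero]; linarith) (ne_of_gt (by rw [cos_zero]; linarith))
  · exact tendsto_upsilon_atTop nhdsWithin_le_nhds (Ioo_mem_nhdsLT pi_div_two_pos) (by simp)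
      (by simpa using hϱ0) (by simpa using hϱ0.ne')

/-- Proposition 5: υ is strictly convex on (0, π/2), blows up at both endpoints,
and has at most two zeros there. -/
theorem upsilon_convex_two_roots (ς ϱ : ℝ) (hς : 1 < ς) (hϱ0 : 0 < ϱ) (hϱ1 : ϱ < 1)
    (υ : ℝ → ℝ)
    (hυ : ∀ α, υ α =
      ((ς - 1) * Real.cos α + ϱ) / (Real.cos α + Real.sin α - 1)
        - (Real.cos α + Real.sin α - 1) / ((ς + 1) * Real.cos α + ϱ)) :
    StrictConvexOn ℝ (Set.Ioo 0 (π / 2)) υ ∧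
    Tendsto υ (nhdsWithin 0 (Set.Ioi 0)) atTop ∧
    Tendsto υ (nhdsWithin (π / 2) (Set.Iio (π / 2))) atTop ∧
    Set.encard {α | α ∈ Set.Ioo 0 (π / 2) ∧ υ α = 0} ≤ 2 :=
  upsilon_convex_two_roots_general ς ϱ hς hϱ0 υ hυ
end

section
/- Let B be an n×k real matrix and δ ∈ (0, 1/3), and assume the full two-sided bound: for all y, y' ∈ ℝ^k and all ordered selections r, r', (1−δ)·d((y,r),(y',r'))² ≤ ‖S_r B y − S_{r'} B y'‖² ≤ (1+δ)·d((y,r),(y',r'))². Let y̌ ∈ ℝ^k be nonzero, ř an ordered selection, and x̌ = S_ř B y̌ (noiseless unlabeled measurements). Let (r^t)_{t≥1} be ordered selections and (y^t)_{t≥1} vectors in ℝ^k generated by alternating minimization: for each t, y^t minimizes y ↦ ‖S_{r^t} B y − x̌‖ over ℝ^k, and r^{t+1} minimizes r ↦ ‖S_r B y^t − x̌‖ over all ordered selections. Set ς = √((1+δ)/(1−δ)) and ν_min = (1 − ς² + 2√(ς²−1)) / (1 + ς² − 2√(ς²−1)). If c(r¹, ř)/m > ν_min, then lim_{t→∞}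 ‖y^t − y̌‖ = 0. -/
open Filter

/-!
Write `λₜ = c(rᵗ, ř) / m` and `κ = ς² - 1 = 2δ / (1 - δ)`. Comparing the `y`-step minimiser with
the competitor `λₜ • y̌` through both RIP bounds gives `‖yᵗ - λₜ • y̌‖² ≤ κ (1 - λₜ²) ‖y̌‖²`, and
comparing the `r`-step minimiser with `ř` gives `2 (1 - λₜ₊₁) ⟪yᵗ, y̌⟫ ≤ κ ‖yᵗ - y̌‖²`. When
`λₜ > ν_min`, the first bound makes `⟪yᵗ, y̌⟫` so large that the second one forces `λₜ₊₁ > λₜ`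
or `λₜ₊₁ = 1`. So the count `c(rᵗ, ř)` increases until it reaches `m`, after at most `m` steps,
and from then on `yᵗ = y̌`.
-/

open scoped RealInnerProductSpace

section InnerProductSpace

variable {E : Type*} [NormedAddCommGroup E] [InnerProductSpace ℝ E] {u v : E} {w l l' : ℝ}

lemma two_inner_gt_of_norm_sub_smul_sq_le (hv : v ≠ 0) (hw0 : 0 ≤ w) (hw1 : w ≤ 1)
    (hl : 0 ≤ l) (hthr : 1 - l < (1 + l) * (1 - w) ^ 2)
    (h : ‖u - l • v‖ ^ 2 ≤ w ^ 2 * (1 - l ^ 2) * ‖v‖ ^ 2) :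
    w ^ 2 * (1 + l) * ‖v‖ ^ 2 < 2 * ⟪u, v⟫ := by
  have hs : 0 < ‖v‖ := norm_pos_iff.mpr hv
  set K := 2 * l - w ^ 2 * (1 + l)
  have hK : 0 < K := by
    nlinarith [mul_nonneg (add_nonneg zero_le_one hl) (mul_nonneg hw0 (sub_nonneg.2 hw1))]
  -- `K ^ 2 - 4 w ^ 2 (1 - l ^ 2)` is the product of the two factors `(1 + l) (1 ∓ w) ^ 2 - (1 - l)`.
  have hK2 : 4 * w ^ 2 * (1 - l ^ 2) < K ^ 2 := by
    have hprod : 0 < ((1 + l) * (1 - w) ^ 2 - (1 - l)) * ((1 + l) * (1 + w) ^ 2 - (1 - l)) :=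
      mul_pos (by linarith) (by nlinarith)
    nlinarith
  have he : 2 * ‖u - l • v‖ < K * ‖v‖ := by
    refine lt_of_pow_lt_pow_left₀ 2 (by positivity) ?_
    nlinarith [mul_lt_mul_of_pos_right hK2 (pow_pos hs 2)]
  have hinner : ⟪u, v⟫ = l * ‖v‖ ^ 2 + ⟪u - l • v, v⟫ := by
    rw [inner_sub_left, real_inner_smul_left, real_inner_self_eq_norm_sq]; ring
  have hcs := neg_le_of_abs_le (abs_real_inner_le_norm (u - l • v) v)
  nlinarith [mul_lt_mul_of_pos_right he hs]

lemma lt_or_one_le_of_norm_sub_smul_sq_le (hv : v ≠ 0) (hw0 : 0 ≤ w) (hw1 : w ≤ 1)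
    (hl0 : 0 ≤ l) (hl1 : l ≤ 1) (hthr : 1 - l < (1 + l) * (1 - w) ^ 2)
    (hA : ‖u - l • v‖ ^ 2 ≤ w ^ 2 * (1 - l ^ 2) * ‖v‖ ^ 2)
    (hB : 2 * (1 - l') * ⟪u, v⟫ ≤ w ^ 2 * ‖u - v‖ ^ 2) :
    l < l' ∨ 1 ≤ l' := by
  have hI := two_inner_gt_of_norm_sub_smul_sq_le hv hw0 hw1 hl0 hthr hA
  have hI0 : 0 < ⟪u, v⟫ := by
    nlinarith [mul_nonneg (sq_nonneg w) (add_nonneg zero_le_one hl0)]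
  set X := (1 + w ^ 2) * (1 + l) * ‖v‖ ^ 2 - 2 * ⟪u, v⟫
  have hdist : ‖u - v‖ ^ 2 ≤ (1 - l) * X := by
    have hexp : ‖u - v‖ ^ 2
        = ‖u - l • v‖ ^ 2 - 2 * (1 - l) * (⟪u, v⟫ - l * ‖v‖ ^ 2) + (1 - l) ^ 2 * ‖v‖ ^ 2 := by
      rw [norm_sub_sq_real, norm_sub_sq_real, real_inner_smul_right, norm_smul,
        Real.norm_eq_abs, mul_pow, sq_abs]
      ring
    nlinarith
  have hX : w ^ 2 * X < 2 * ⟪u, v⟫ := by nlinarith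
  rcases hl1.lt_or_eq with hl1 | rfl
  · left
    by_contra! h
    nlinarith [mul_le_mul_of_nonneg_left hdist (sq_nonneg w),
      mul_lt_mul_of_pos_left hX (sub_pos.2 hl1)]
  · right
    nlinarith [norm_nonneg (u - v)]

end InnerProductSpace

lemma one_sub_lt_one_add_mul_sq_of_lt {ς l : ℝ} (hς : 1 ≤ ς ^ 2)
    (h : (1 - ς ^ 2 + 2 * √(ς ^ 2 - 1)) / (1 + ς ^ 2 - 2 * √(ς ^ 2 - 1)) < l) :
    1 - l < (1 + l) * (1 - √(ς ^ 2 - 1)) ^ 2 := by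
  set w := √(ς ^ 2 - 1)
  have hς2 : ς ^ 2 = 1 + w ^ 2 := by rw [Real.sq_sqrt (sub_nonneg.2 hς)]; ring
  rw [hς2, div_lt_iff₀ (by nlinarith [sq_nonneg (1 - w)])] at h
  nlinarith

lemma min_add_le_of_lt_or_le {c : ℕ → ℕ} {m : ℕ} (h0 : c 0 ≤ m)
    (hstep : ∀ j, c 0 ≤ c j → c j < c (j + 1) ∨ m ≤ c (j + 1)) (j : ℕ) :
    min (c 0 + j) m ≤ c j := by
  induction j with
  | zero => omega
  | succ j ih => have := hstep j (by omega); omega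

section Selections

variable {n k m : ℕ}

noncomputable def simRatio (r r' : Fin m → Fin n) : ℝ := simCount r r' / m

lemma simCount_le (r r' : Fin m → Fin n) : simCount r r' ≤ m :=
  (Finset.card_filter_le _ _).trans_eq (Finset.card_fin m)

lemma simCount_self (r : Fin m → Fin n) : simCount r r = m := by
  simp [simCount]

lemma simRatio_nonneg (r r' : Fin m → Fin n) : 0 ≤ simRatio r r' := by
  unfold simRatio; positivity

lemma simRatio_le_one (r r' : Fin m → Fin n) : simRatio r r' ≤ 1 :=
  div_le_one_of_le₀ (by exact_mod_cast simCount_le r r') (Nat.cast_nonneg m)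

lemma simRatio_self (hm : 0 < m) (r : Fin m → Fin n) : simRatio r r = 1 := by
  rw [simRatio, simCount_self, div_self (by positivity)]

lemma selDist_sq (y y' : EuclideanSpace ℝ (Fin k)) (r r' : Fin m → Fin n) :
    selDist y y' r r' ^ 2
      = m * ‖y‖ ^ 2 + m * ‖y'‖ ^ 2 - 2 * (simCount r r' : ℝ) * ⟪y, y'⟫ := by
  refine Real.sq_sqrt ?_
  have hcm : (simCount r r' : ℝ) ≤ m := by exact_mod_cast simCount_le r r'
  have hcs : (simCount r r' : ℝ) * ⟪y, y'⟫ ≤ (simCount r r') * (‖y‖ * ‖y'‖) :=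
    mul_le_mul_of_nonneg_left (real_inner_le_norm y y') (Nat.cast_nonneg _)
  nlinarith [mul_le_mul_of_nonneg_right hcm (mul_nonneg (norm_nonneg y) (norm_nonneg y')),
    mul_nonneg (Nat.cast_nonneg (α := ℝ) m) (sq_nonneg (‖y‖ - ‖y'‖))]

lemma selDist_sq_eq_norm_sub_smul (hm : 0 < m) (y y' : EuclideanSpace ℝ (Fin k))
    (r r' : Fin m → Fin n) :
    selDist y y' r r' ^ 2
      = m * (‖y - simRatio r r' • y'‖ ^ 2 + (1 - simRatio r r' ^ 2) * ‖y'‖ ^ 2) := by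
  rw [selDist_sq, norm_sub_sq_real, norm_smul, real_inner_smul_right, Real.norm_eq_abs, mul_pow,
    sq_abs, simRatio]
  field_simp
  ring

lemma selDist_sq_eq_norm_sub (hm : 0 < m) (y y' : EuclideanSpace ℝ (Fin k))
    (r r' : Fin m → Fin n) :
    selDist y y' r r' ^ 2 = m * (‖y - y'‖ ^ 2 + 2 * (1 - simRatio r r') * ⟪y, y'⟫) := by
  rw [selDist_sq, norm_sub_sq_real, simRatio]
  field_simp
  ring

def SelectionRIP (m : ℕ) (B : Matrix (Fin n) (Fin k) ℝ) (δ : ℝ) : Prop :=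
  ∀ (y y' : EuclideanSpace ℝ (Fin k)) (r r' : Fin m → Fin n), StrictMono r → StrictMono r' →
    (1 - δ) * (selDist y y' r r') ^ 2 ≤ ‖selApply B r y - selApply B r' y'‖ ^ 2 ∧
    ‖selApply B r y - selApply B r' y'‖ ^ 2 ≤ (1 + δ) * (selDist y y' r r') ^ 2

variable {B : Matrix (Fin n) (Fin k) ℝ} {δ : ℝ} {r r' r₀ : Fin m → Fin n}
  {y y₀ : EuclideanSpace ℝ (Fin k)}

lemma norm_sub_simRatio_smul_sq_le (hB : SelectionRIP m B δ) (hδ : δ < 1) (hm : 0 < m)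
    (hr : StrictMono r) (hr₀ : StrictMono r₀)
    (hmin : ∀ z, ‖selApply B r y - selApply B r₀ y₀‖ ≤ ‖selApply B r z - selApply B r₀ y₀‖) :
    ‖y - simRatio r r₀ • y₀‖ ^ 2
      ≤ 2 * δ / (1 - δ) * (1 - simRatio r r₀ ^ 2) * ‖y₀‖ ^ 2 := by
  set l := simRatio r r₀
  have hlow := (hB y y₀ r r₀ hr hr₀).1
  have hupp := (hB (l • y₀) y₀ r r₀ hr hr₀).2
  rw [selDist_sq_eq_norm_sub_smul hm] at hlow hupp
  have key := hlow.trans ((pow_le_pow_left₀ (norm_nonneg _) (hmin (l • y₀)) 2).trans hupp)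
  rw [sub_self, norm_zero, zero_pow two_ne_zero, zero_add] at key
  have hm' : (0 : ℝ) < m := by exact_mod_cast hm
  rw [div_mul_eq_mul_div, div_mul_eq_mul_div, le_div_iff₀ (sub_pos.2 hδ)]
  nlinarith

lemma two_mul_one_sub_simRatio_mul_inner_le (hB : SelectionRIP m B δ) (hδ : δ < 1) (hm : 0 < m)
    (hr' : StrictMono r') (hr₀ : StrictMono r₀)
    (hmin : ‖selApply B r' y - selApply B r₀ y₀‖ ≤ ‖selApply B r₀ y - selApply B r₀ y₀‖) :
    2 * (1 - simRatio r' r₀) * ⟪y, y₀⟫ ≤ 2 * δ / (1 - δ) * ‖y - y₀‖ ^ 2 := by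
  have hlow := (hB y y₀ r' r₀ hr' hr₀).1
  have hupp := (hB y y₀ r₀ r₀ hr₀ hr₀).2
  rw [selDist_sq_eq_norm_sub hm] at hlow hupp
  rw [simRatio_self hm, sub_self, mul_zero, zero_mul, add_zero] at hupp
  have key := hlow.trans ((pow_le_pow_left₀ (norm_nonneg _) hmin 2).trans hupp)
  have hm' : (0 : ℝ) < m := by exact_mod_cast hm
  rw [div_mul_eq_mul_div, le_div_iff₀ (sub_pos.2 hδ)]
  nlinarith

lemma eq_of_simCount_eq (hB : SelectionRIP m B δ) (hδ : δ < 1) (hm : 0 < m)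
    (hr : StrictMono r) (hr₀ : StrictMono r₀) (hc : simCount r r₀ = m)
    (hmin : ∀ z, ‖selApply B r y - selApply B r₀ y₀‖ ≤ ‖selApply B r z - selApply B r₀ y₀‖) :
    y = y₀ := by
  have h := norm_sub_simRatio_smul_sq_le hB hδ hm hr hr₀ hmin
  rw [simRatio, hc, div_self (by positivity), one_smul, one_pow, sub_self, mul_zero,
    zero_mul] at h
  exact sub_eq_zero.1 (norm_eq_zero.1 ((pow_eq_zero_iff two_ne_zero).1 (h.antisymm (sq_nonneg _))))

lemma simCount_lt_or_le_of_altMin_step {w : ℝ} (hB : SelectionRIP m B δ) (hδ : δ < 1)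
    (hm : 0 < m) (hr : StrictMono r) (hr' : StrictMono r') (hr₀ : StrictMono r₀) (hy₀ : y₀ ≠ 0)
    (hw0 : 0 ≤ w) (hw1 : w ≤ 1) (hw : w ^ 2 = 2 * δ / (1 - δ))
    (hthr : 1 - simRatio r r₀ < (1 + simRatio r r₀) * (1 - w) ^ 2)
    (hymin : ∀ z, ‖selApply B r y - selApply B r₀ y₀‖ ≤ ‖selApply B r z - selApply B r₀ y₀‖)
    (hrmin : ‖selApply B r' y - selApply B r₀ y₀‖ ≤ ‖selApply B r₀ y - selApply B r₀ y₀‖) :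
    simCount r r₀ < simCount r' r₀ ∨ m ≤ simCount r' r₀ := by
  have hm' : (0 : ℝ) < m := by exact_mod_cast hm
  have h := lt_or_one_le_of_norm_sub_smul_sq_le hy₀ hw0 hw1 (simRatio_nonneg r r₀)
    (simRatio_le_one r r₀) hthr (hw ▸ norm_sub_simRatio_smul_sq_le hB hδ hm hr hr₀ hymin)
    (hw ▸ two_mul_one_sub_simRatio_mul_inner_le hB hδ hm hr' hr₀ hrmin)
  rwa [simRatio, simRatio, div_lt_div_iff_of_pos_right hm', one_le_div hm', Nat.cast_lt,
    Nat.cast_le] at h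

end Selections

theorem altmin_noiseless_convergence_general {n k m : ℕ} (hm : 0 < m)
    (B : Matrix (Fin n) (Fin k) ℝ) (δ : ℝ) (hδ0 : 0 < δ) (hδ1 : δ < 1 / 3)
    (hRRIP : ∀ (y y' : EuclideanSpace ℝ (Fin k)) (r r' : Fin m → Fin n),
      StrictMono r → StrictMono r' →
      (1 - δ) * (selDist y y' r r') ^ 2 ≤ ‖selApply B r y - selApply B r' y'‖ ^ 2 ∧
      ‖selApply B r y - selApply B r' y'‖ ^ 2 ≤ (1 + δ) * (selDist y y' r r') ^ 2)
    (ychk : EuclideanSpace ℝ (Fin k)) (hychk : ychk ≠ 0)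
    (rchk : Fin m → Fin n) (hrchk : StrictMono rchk)
    (xchk : EuclideanSpace ℝ (Fin m)) (hxchk : xchk = selApply B rchk ychk)
    (r : ℕ → Fin m → Fin n) (y : ℕ → EuclideanSpace ℝ (Fin k))
    (hmono : ∀ t, 1 ≤ t → StrictMono (r t))
    (hYstep : ∀ t, 1 ≤ t → ∀ y' : EuclideanSpace ℝ (Fin k),
      ‖selApply B (r t) (y t) - xchk‖ ≤ ‖selApply B (r t) y' - xchk‖)
    (hSstep : ∀ t, 1 ≤ t → ∀ s : Fin m → Fin n, StrictMono s →
      ‖selApply B (r (t + 1)) (y t) - xchk‖ ≤ ‖selApply B s (y t) - xchk‖)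
    (ς : ℝ) (hς : ς = Real.sqrt ((1 + δ) / (1 - δ)))
    (νmin : ℝ)
    (hνmin : νmin = (1 - ς ^ 2 + 2 * Real.sqrt (ς ^ 2 - 1))
      / (1 + ς ^ 2 - 2 * Real.sqrt (ς ^ 2 - 1)))
    (hinit : (simCount (r 1) rchk : ℝ) / m > νmin) :
    Tendsto (fun t => ‖y t - ychk‖) atTop (nhds 0) := by
  subst hxchk hνmin
  have hδ : δ < 1 := by linarith
  have hκ : 0 ≤ 2 * δ / (1 - δ) := div_nonneg (by linarith) (by linarith)
  have hς2 : ς ^ 2 - 1 = 2 * δ / (1 - δ) := by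
    rw [hς, Real.sq_sqrt (div_nonneg (by linarith) (by linarith))]
    field_simp [(sub_pos.2 hδ).ne']
    ring
  have hw : √(ς ^ 2 - 1) ^ 2 = 2 * δ / (1 - δ) := by rw [Real.sq_sqrt (hς2 ▸ hκ), hς2]
  have hw1 : √(ς ^ 2 - 1) ≤ 1 :=
    Real.sqrt_le_one.2 (hς2 ▸ (div_le_one (by linarith)).2 (by linarith))
  set c := fun j => simCount (r (j + 1)) rchk
  have hstep : ∀ j, c 0 ≤ c j → c j < c (j + 1) ∨ m ≤ c (j + 1) := fun j hj =>
    simCount_lt_or_le_of_altMin_step hRRIP hδ hm (hmono _ (by omega)) (hmono _ (by omega)) hrchk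
      hychk (Real.sqrt_nonneg _) hw1 hw
      (one_sub_lt_one_add_mul_sq_of_lt (by linarith)
        (hinit.trans_le (div_le_div_of_nonneg_right (by exact_mod_cast hj) (Nat.cast_nonneg m))))
      (hYstep _ (by omega)) (hSstep _ (by omega) rchk hrchk)
  have hlimit : ∀ t, m + 1 ≤ t → y t = ychk := fun t ht => by
    have hc := min_add_le_of_lt_or_le (simCount_le _ _) hstep (t - 1)
    simp only [c, Nat.sub_add_cancel (by omega : 1 ≤ t)] at hc
    have hct : simCount (r t) rchk = m := by have := simCount_le (r t) rchk; omega
    exact eq_of_simCount_eq hRRIP hδ hm (hmono t (by omega)) hrchk hct (hYstep t (by omega))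
  refine tendsto_const_nhds.congr' ?_
  filter_upwards [eventually_ge_atTop (m + 1)] with t ht
  rw [hlimit t ht, sub_self, norm_zero]

/-- Theorem 2 (noiseless case): convergence of alternating minimization. -/
theorem altmin_noiseless_convergence {n k m : ℕ} (hm : 0 < m) (hmn : m ≤ n)
    (B : Matrix (Fin n) (Fin k) ℝ) (δ : ℝ) (hδ0 : 0 < δ) (hδ1 : δ < 1 / 3)
    (hRRIP : ∀ (y y' : EuclideanSpace ℝ (Fin k)) (r r' : Fin m → Fin n),
      StrictMono r → StrictMono r' →
      (1 - δ) * (selDist y y' r r') ^ 2 ≤ ‖selApply B r y - selApply B r' y'‖ ^ 2 ∧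
      ‖selApply B r y - selApply B r' y'‖ ^ 2 ≤ (1 + δ) * (selDist y y' r r') ^ 2)
    (ychk : EuclideanSpace ℝ (Fin k)) (hychk : ychk ≠ 0)
    (rchk : Fin m → Fin n) (hrchk : StrictMono rchk)
    (xchk : EuclideanSpace ℝ (Fin m)) (hxchk : xchk = selApply B rchk ychk)
    (r : ℕ → Fin m → Fin n) (y : ℕ → EuclideanSpace ℝ (Fin k))
    (hmono : ∀ t, 1 ≤ t → StrictMono (r t))
    (hYstep : ∀ t, 1 ≤ t → ∀ y' : EuclideanSpace ℝ (Fin k),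
      ‖selApply B (r t) (y t) - xchk‖ ≤ ‖selApply B (r t) y' - xchk‖)
    (hSstep : ∀ t, 1 ≤ t → ∀ s : Fin m → Fin n, StrictMono s →
      ‖selApply B (r (t + 1)) (y t) - xchk‖ ≤ ‖selApply B s (y t) - xchk‖)
    (ς : ℝ) (hς : ς = Real.sqrt ((1 + δ) / (1 - δ)))
    (νmin : ℝ)
    (hνmin : νmin = (1 - ς ^ 2 + 2 * Real.sqrt (ς ^ 2 - 1))
      / (1 + ς ^ 2 - 2 * Real.sqrt (ς ^ 2 - 1)))
    (hinit : (simCount (r 1) rchk : ℝ) / m > νmin) :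
    Tendsto (fun t => ‖y t - ychk‖) atTop (nhds 0) :=
  altmin_noiseless_convergence_general hm B δ hδ0 hδ1 hRRIP ychk hychk rchk hrchk xchk hxchk r y
    hmono hYstep hSstep ς hς νmin hνmin hinit
end

section
/- Let B be an n×k real matrix, δ ∈ (0,1), y̌ ∈ ℝ^k nonzero, ř an ordered selection, w ∈ ℝ^m, and x̌ = S_ř B y̌ + w. Assume that for every y ∈ ℝ^k and every ordered selection r: (1−δ)·d((y,r),(y̌,ř))² ≤ ‖S_r B y − S_ř B y̌‖² ≤ (1+δ)·d((y,r),(y̌,ř))². Let r be an ordered selection, set ν = c(r,ř)/m and ζ = ‖w‖/(√m·‖y̌‖), and let y* be a minimizer of y ↦ ‖S_r B y − x̌‖ over ℝ^k. Then d((y*,r),(y̌,ř))/(√m·‖y̌‖) ≤ √((1+δ)/(1−δ))·√(1−ν²) + 2ζ/√(1−δ). -/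
/-! Compare the minimizer `y*` with the competitor `ν • y̌`. Its distance to `(y̌, ř)` is
exactly `√m ‖y̌‖ √(1 - ν²)`, and since `y*` fits the noisy data `x̌` at least as well as `ν • y̌`,
the triangle inequality bounds `‖S_r B y* - S_ř B y̌‖` by `‖S_r B (ν • y̌) - S_ř B y̌‖ + 2‖w‖`.
The two sides of the near-isometry hypothesis turn this into the stated bound on `d`. -/

lemma norm_sub_le_norm_sub_add_two_mul_norm {E : Type*} [SeminormedAddCommGroup E]
    {a b z w : E} (h : ‖a - (z + w)‖ ≤ ‖b - (z + w)‖) : ‖a - z‖ ≤ ‖b - z‖ + 2 * ‖w‖ :=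
  calc ‖a - z‖ = ‖(a - (z + w)) + w‖ := by rw [sub_add_eq_sub_sub, sub_add_cancel]
    _ ≤ ‖b - (z + w)‖ + ‖w‖ := (norm_add_le _ _).trans (by gcongr)
    _ = ‖(b - z) - w‖ + ‖w‖ := by rw [sub_add_eq_sub_sub]
    _ ≤ ‖b - z‖ + 2 * ‖w‖ := by linarith [norm_sub_le (b - z) w]

lemma sqrt_mul_le_of_mul_sq_le_sq {a b d : ℝ} (hb : 0 ≤ b) (h : a * d ^ 2 ≤ b ^ 2) :
    √a * d ≤ b :=
  calc √a * d ≤ √a * |d| := mul_le_mul_of_nonneg_left (le_abs_self d) (Real.sqrt_nonneg a)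
    _ = √(a * d ^ 2) := by rw [Real.sqrt_mul' a (sq_nonneg d), Real.sqrt_sq_eq_abs]
    _ ≤ b := (Real.sqrt_le_sqrt h).trans_eq (Real.sqrt_sq hb)

lemma le_sqrt_mul_of_sq_le_mul_sq {a b d : ℝ} (hd : 0 ≤ d) (h : b ^ 2 ≤ a * d ^ 2) :
    b ≤ √a * d :=
  calc b ≤ √(b ^ 2) := by rw [Real.sqrt_sq_eq_abs]; exact le_abs_self b
    _ ≤ √(a * d ^ 2) := Real.sqrt_le_sqrt h
    _ = √a * d := by rw [Real.sqrt_mul' a (sq_nonneg d), Real.sqrt_sq hd]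

lemma selDist_nonneg {n k m : ℕ} (y y' : EuclideanSpace ℝ (Fin k)) (r r' : Fin m → Fin n) :
    0 ≤ selDist y y' r r' :=
  Real.sqrt_nonneg _

lemma selDist_smul_self {n k m : ℕ} (hm : 0 < m) (y : EuclideanSpace ℝ (Fin k))
    {r r' : Fin m → Fin n} {ν : ℝ} (hν : ν = (simCount r r' : ℝ) / m) :
    selDist (ν • y) y r r' = √m * ‖y‖ * √(1 - ν ^ 2) := by
  have hc : (simCount r r' : ℝ) = ν * m := by
    rw [hν, div_mul_cancel₀ _ (Nat.cast_pos.mpr hm).ne']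
  have hsq : (m : ℝ) * ‖ν • y‖ ^ 2 + m * ‖y‖ ^ 2 - 2 * (simCount r r' : ℝ) * inner ℝ (ν • y) y
      = (m * ‖y‖ ^ 2) * (1 - ν ^ 2) := by
    rw [norm_smul, real_inner_smul_left, real_inner_self_eq_norm_sq, Real.norm_eq_abs, mul_pow,
      sq_abs, hc]
    ring
  rw [selDist, hsq, Real.sqrt_mul (by positivity), Real.sqrt_mul (Nat.cast_nonneg m),
    Real.sqrt_sq (norm_nonneg y)]

theorem projection_on_Y_bound_general {n k m : ℕ} (hm : 0 < m)
    (B : Matrix (Fin n) (Fin k) ℝ) (δ : ℝ) (hδ1 : δ < 1)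
    (ychk : EuclideanSpace ℝ (Fin k)) (hychk : ychk ≠ 0)
    (rchk : Fin m → Fin n)
    (w : EuclideanSpace ℝ (Fin m))
    (xchk : EuclideanSpace ℝ (Fin m)) (hxchk : xchk = selApply B rchk ychk + w)
    (hbound : ∀ (y : EuclideanSpace ℝ (Fin k)) (r : Fin m → Fin n), StrictMono r →
      (1 - δ) * (selDist y ychk r rchk) ^ 2
          ≤ ‖selApply B r y - selApply B rchk ychk‖ ^ 2 ∧
      ‖selApply B r y - selApply B rchk ychk‖ ^ 2
          ≤ (1 + δ) * (selDist y ychk r rchk) ^ 2)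
    (r : Fin m → Fin n) (hr : StrictMono r)
    (ν ζ : ℝ) (hν : ν = (simCount r rchk : ℝ) / m)
    (hζ : ζ = ‖w‖ / (Real.sqrt m * ‖ychk‖))
    (ystar : EuclideanSpace ℝ (Fin k))
    (hmin : ∀ y : EuclideanSpace ℝ (Fin k),
      ‖selApply B r ystar - xchk‖ ≤ ‖selApply B r y - xchk‖) :
    selDist ystar ychk r rchk / (Real.sqrt m * ‖ychk‖) ≤
      Real.sqrt ((1 + δ) / (1 - δ)) * Real.sqrt (1 - ν ^ 2)
        + 2 * ζ / Real.sqrt (1 - δ) := by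
  subst hζ xchk
  have hlow := sqrt_mul_le_of_mul_sq_le_sq (norm_nonneg _) (hbound ystar r hr).1
  have hup := le_sqrt_mul_of_sq_le_mul_sq (selDist_nonneg _ _ _ _) (hbound (ν • ychk) r hr).2
  rw [selDist_smul_self hm ychk hν] at hup
  have hfit := norm_sub_le_norm_sub_add_two_mul_norm (hmin (ν • ychk))
  have hscale : 0 < √m * ‖ychk‖ :=
    mul_pos (Real.sqrt_pos.mpr (Nat.cast_pos.mpr hm)) (norm_pos_iff.mpr hychk)
  have hsδ : 0 < √(1 - δ) := Real.sqrt_pos.mpr (sub_pos.mpr hδ1)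
  rw [Real.sqrt_div' _ (sub_pos.mpr hδ1).le, div_le_iff₀ hscale, ← mul_le_mul_iff_right₀ hsδ]
  calc √(1 - δ) * selDist ystar ychk r rchk
      ≤ √(1 + δ) * (√m * ‖ychk‖ * √(1 - ν ^ 2)) + 2 * ‖w‖ := by linarith
    _ = _ := by field_simp

/-- One projection step onto 𝓨: bound on the distance of the least-squares
minimizer to the target (equation (26) in the paper). -/
theorem projection_on_Y_bound {n k m : ℕ} (hm : 0 < m) (hmn : m ≤ n)
    (B : Matrix (Fin n) (Fin k) ℝ) (δ : ℝ) (hδ0 : 0 < δ) (hδ1 : δ < 1)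
    (ychk : EuclideanSpace ℝ (Fin k)) (hychk : ychk ≠ 0)
    (rchk : Fin m → Fin n) (hrchk : StrictMono rchk)
    (w : EuclideanSpace ℝ (Fin m))
    (xchk : EuclideanSpace ℝ (Fin m)) (hxchk : xchk = selApply B rchk ychk + w)
    (hbound : ∀ (y : EuclideanSpace ℝ (Fin k)) (r : Fin m → Fin n), StrictMono r →
      (1 - δ) * (selDist y ychk r rchk) ^ 2
          ≤ ‖selApply B r y - selApply B rchk ychk‖ ^ 2 ∧
      ‖selApply B r y - selApply B rchk ychk‖ ^ 2
          ≤ (1 + δ) * (selDist y ychk r rchk) ^ 2)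
    (r : Fin m → Fin n) (hr : StrictMono r)
    (ν ζ : ℝ) (hν : ν = (simCount r rchk : ℝ) / m)
    (hζ : ζ = ‖w‖ / (Real.sqrt m * ‖ychk‖))
    (ystar : EuclideanSpace ℝ (Fin k))
    (hmin : ∀ y : EuclideanSpace ℝ (Fin k),
      ‖selApply B r ystar - xchk‖ ≤ ‖selApply B r y - xchk‖) :
    selDist ystar ychk r rchk / (Real.sqrt m * ‖ychk‖) ≤
      Real.sqrt ((1 + δ) / (1 - δ)) * Real.sqrt (1 - ν ^ 2)
        + 2 * ζ / Real.sqrt (1 - δ) :=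
  projection_on_Y_bound_general hm B δ hδ1 ychk hychk rchk w xchk hxchk hbound r hr ν ζ hν hζ ystar
    hmin
end
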